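/- arXiv:1507.07513 — 10 statements merged into one kernel-verified Lean document; each statement's English description precedes it below -/
import Mathlib

section
/- Let p be a prime, k a positive integer, and u an integer that is a quadratic residue of p^k, is divisible by p, but is not divisible by p^k. Then the multiplicity of p in u is an even number 2μ with 0 < 2μ < k, and, writing u = u₁·p^{2μ}, the set of integers σ with 0 ≤ σ < p^k and σ² ≡ u (mod p^k) equals the set of residues mod p^k of the integers σ′·p^μ + i·p^{k−μ}, where σ′ ranges over all integers with 0 ≤ σ′ < p^{k−2μ} and σ′² ≡ u₁ (mod p^{k−2μ}), and i ranges over {0, 1, …, p^μ − 1}. -/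
/-- An integer `u` is a quadratic residue of the nonzero integer `v`. -/
def IsQR (v u : ℤ) : Prop := ∃ x : ℤ, v ∣ x ^ 2 - u

/-!
Any square root `x` of `u` modulo `p ^ k` has `p`-adic valuation exactly half that of `u`,
since `x ^ 2` and `u` agree modulo a power of `p` beyond `v_p(u)`; so `v_p(u) = 2μ` is even and
every root is `p ^ μ * t`. Dividing the congruence `(p ^ μ t) ^ 2 ≡ u₁ p ^ (2μ)` by `p ^ (2μ)`
leaves `t ^ 2 ≡ u₁ (mod p ^ (k - 2μ))`, and writing `t = σ' + i p ^ (k - 2μ)` with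
`0 ≤ σ' < p ^ (k - 2μ)`, `0 ≤ i < p ^ μ` gives the stated parametrisation.
-/

section Valuation

variable {p : ℕ} [Fact p.Prime]

theorem padicValInt_lt_of_not_pow_dvd {k : ℕ} {a : ℤ} (ha : ¬ (p : ℤ) ^ k ∣ a) :
    padicValInt p a < k := by
  by_contra! h
  exact ha ((padicValInt_dvd_iff k a).2 (Or.inr h))

theorem padicValInt_eq_of_dvd_sub {k : ℕ} {a b : ℤ} (hab : (p : ℤ) ^ k ∣ a - b)
    (hb : ¬ (p : ℤ) ^ k ∣ b) : padicValInt p a = padicValInt p b := by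
  have hb0 : b ≠ 0 := by rintro rfl; exact hb (dvd_zero _)
  have ha0 : a ≠ 0 := by rintro rfl; exact hb (by simpa using hab)
  have hbk := padicValInt_lt_of_not_pow_dvd hb
  have hle_iff : ∀ n ≤ k, n ≤ padicValInt p a ↔ n ≤ padicValInt p b := fun n hn => by
    have := dvd_iff_dvd_of_dvd_sub ((pow_dvd_pow _ hn).trans hab)
    simpa [padicValInt_dvd_iff, ha0, hb0] using this
  have h₁ := (hle_iff _ hbk.le).2 le_rfl
  have h₂ := (hle_iff _ hbk).not.2 (by omega)
  omega

theorem two_mul_padicValInt_eq_of_dvd_sq_sub {k : ℕ} {x u : ℤ} (hx : (p : ℤ) ^ k ∣ x ^ 2 - u)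
    (hu : ¬ (p : ℤ) ^ k ∣ u) : 2 * padicValInt p x = padicValInt p u := by
  have hx0 : x ≠ 0 := by rintro rfl; exact hu (by simpa using hx)
  rw [← padicValInt_eq_of_dvd_sub hx hu, sq, padicValInt.mul hx0 hx0, two_mul]

end Valuation

theorem dvd_sq_sub_iff_of_modEq {n a b c : ℤ} (h : a ≡ b [ZMOD n]) :
    n ∣ a ^ 2 - c ↔ n ∣ b ^ 2 - c := by
  simp only [← Int.modEq_iff_dvd]
  exact ⟨fun hc => hc.trans (h.pow 2), fun hc => hc.trans (h.pow 2).symm⟩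

theorem mul_sq_dvd_sq_mul_sub_iff {n c a b : ℤ} (hc : c ≠ 0) :
    n * c ^ 2 ∣ (c * a) ^ 2 - c ^ 2 * b ↔ n ∣ a ^ 2 - b := by
  rw [show (c * a) ^ 2 - c ^ 2 * b = (a ^ 2 - b) * c ^ 2 by ring]
  exact mul_dvd_mul_iff_right (pow_ne_zero 2 hc)

theorem sqrts_mod_mul_sq_eq {N M u : ℤ} (hN : 0 < N) (hM : 0 < M) (hMu : M ^ 2 ∣ u)
    (hroot : ∀ σ, N * M ^ 2 ∣ σ ^ 2 - u → M ∣ σ) :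
    {σ : ℤ | 0 ≤ σ ∧ σ < N * M ^ 2 ∧ N * M ^ 2 ∣ σ ^ 2 - u} =
      {x : ℤ | ∃ σ' : ℤ, ∃ i : ℕ, 0 ≤ σ' ∧ σ' < N ∧ N ∣ σ' ^ 2 - u / M ^ 2 ∧ (i : ℤ) < M ∧
        x = (σ' * M + i * (N * M)) % (N * M ^ 2)} := by
  obtain ⟨u₁, rfl⟩ := hMu
  rw [Int.mul_ediv_cancel_left _ (pow_ne_zero 2 hM.ne')]
  ext x
  constructor
  · rintro ⟨hx0, hxlt, hx⟩
    obtain ⟨t, rfl⟩ := hroot x hx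
    have ht0 : 0 ≤ t := nonneg_of_mul_nonneg_right hx0 hM
    have htlt : t < N * M := by nlinarith
    have hq0 : 0 ≤ t / N := Int.ediv_nonneg ht0 hN.le
    refine ⟨t % N, (t / N).toNat, Int.emod_nonneg t hN.ne', Int.emod_lt_of_pos t hN, ?_, ?_, ?_⟩
    · exact (dvd_sq_sub_iff_of_modEq (Int.mod_modEq t N)).2
        ((mul_sq_dvd_sq_mul_sub_iff hM.ne').1 hx)
    · rw [Int.toNat_of_nonneg hq0]
      exact Int.ediv_lt_of_lt_mul hN (by linarith)
    · rw [Int.toNat_of_nonneg hq0, ← Int.emod_eq_of_lt hx0 hxlt]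
      congr 1
      linear_combination -M * Int.emod_add_mul_ediv t N
  · rintro ⟨σ', i, -, -, hσ', -, rfl⟩
    have hn : 0 < N * M ^ 2 := by positivity
    refine ⟨Int.emod_nonneg _ hn.ne', Int.emod_lt_of_pos _ hn, ?_⟩
    rw [dvd_sq_sub_iff_of_modEq (Int.mod_modEq _ _),
      show σ' * M + i * (N * M) = M * (σ' + N * i) by ring, mul_sq_dvd_sq_mul_sub_iff hM.ne']
    refine (dvd_sq_sub_iff_of_modEq ?_).2 hσ'
    simp [Int.ModEq]

theorem gauss_case_II_general (p k : ℕ) (hp : p.Prime) (u : ℤ)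
    (hqr : IsQR ((p : ℤ) ^ k) u) (hpu : (p : ℤ) ∣ u) (hpku : ¬ (p : ℤ) ^ k ∣ u) :
    ∃ μ : ℕ, padicValInt p u = 2 * μ ∧ 0 < 2 * μ ∧ 2 * μ < k ∧
      {σ : ℤ | 0 ≤ σ ∧ σ < (p : ℤ) ^ k ∧ (p : ℤ) ^ k ∣ σ ^ 2 - u} =
        {x : ℤ | ∃ σ' : ℤ, ∃ i : ℕ,
          0 ≤ σ' ∧ σ' < (p : ℤ) ^ (k - 2 * μ) ∧
          (p : ℤ) ^ (k - 2 * μ) ∣ σ' ^ 2 - u / (p : ℤ) ^ (2 * μ) ∧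
          i < p ^ μ ∧
          x = (σ' * (p : ℤ) ^ μ + (i : ℤ) * (p : ℤ) ^ (k - μ)) % (p : ℤ) ^ k} := by
  have : Fact p.Prime := ⟨hp⟩
  obtain ⟨x, hx⟩ := hqr
  set μ := padicValInt p x
  have hμ := (two_mul_padicValInt_eq_of_dvd_sq_sub hx hpku).symm
  have hu0 : u ≠ 0 := by rintro rfl; exact hpku (dvd_zero _)
  have hpos : 0 < padicValInt p u :=
    ((padicValInt_dvd_iff 1 u).1 (by simpa using hpu)).resolve_left hu0
  have hlt := padicValInt_lt_of_not_pow_dvd hpku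
  refine ⟨μ, hμ, hμ ▸ hpos, hμ ▸ hlt, ?_⟩
  have hp0 : (0 : ℤ) < p := by exact_mod_cast hp.pos
  have hk : (p : ℤ) ^ k = (p : ℤ) ^ (k - 2 * μ) * ((p : ℤ) ^ μ) ^ 2 := by
    rw [← pow_mul, ← pow_add]; congr 1; omega
  have hkμ : (p : ℤ) ^ (k - μ) = (p : ℤ) ^ (k - 2 * μ) * (p : ℤ) ^ μ := by
    rw [← pow_add]; congr 1; omega
  have hroot : ∀ σ, (p : ℤ) ^ k ∣ σ ^ 2 - u → (p : ℤ) ^ μ ∣ σ := fun σ hσ => by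
    have := two_mul_padicValInt_eq_of_dvd_sq_sub hσ hpku
    exact (show padicValInt p σ = μ by omega) ▸ padicValInt_dvd σ
  have h2μ : (p : ℤ) ^ (2 * μ) = ((p : ℤ) ^ μ) ^ 2 := by rw [← pow_mul, mul_comm]
  have hdvd : ((p : ℤ) ^ μ) ^ 2 ∣ u := h2μ ▸ hμ ▸ padicValInt_dvd u
  have := sqrts_mod_mul_sq_eq (pow_pos hp0 (k - 2 * μ)) (pow_pos hp0 μ) hdvd (hk ▸ hroot)
  rw [hk, hkμ, h2μ]
  simpa only [← Nat.cast_pow, Nat.cast_lt] using this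

/-- Gauss' solution of the square-root problem, case II. -/
theorem gauss_case_II (p k : ℕ) (hp : p.Prime) (hk : 1 ≤ k) (u : ℤ)
    (hqr : IsQR ((p : ℤ) ^ k) u) (hpu : (p : ℤ) ∣ u) (hpku : ¬ (p : ℤ) ^ k ∣ u) :
    ∃ μ : ℕ, padicValInt p u = 2 * μ ∧ 0 < 2 * μ ∧ 2 * μ < k ∧
      {σ : ℤ | 0 ≤ σ ∧ σ < (p : ℤ) ^ k ∧ (p : ℤ) ^ k ∣ σ ^ 2 - u} =
        {x : ℤ | ∃ σ' : ℤ, ∃ i : ℕ,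
          0 ≤ σ' ∧ σ' < (p : ℤ) ^ (k - 2 * μ) ∧
          (p : ℤ) ^ (k - 2 * μ) ∣ σ' ^ 2 - u / (p : ℤ) ^ (2 * μ) ∧
          i < p ^ μ ∧
          x = (σ' * (p : ℤ) ^ μ + (i : ℤ) * (p : ℤ) ^ (k - μ)) % (p : ℤ) ^ k} :=
  gauss_case_II_general p k hp u hqr hpu hpku
end

section
/- Let a, b, c, n be integers with a ≠ 0 and n ≥ 2. If gcd(2·a, n) = 1, then IQF is valid for q(x) ≡ 0 (mod n). -/
/-- The intermediate form of the quadratic formula (IQF) is valid for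
`a·x² + b·x + c ≡ 0 (mod n)`. -/
def IQF (a b c n : ℤ) : Prop :=
  ∀ x : ℤ, n ∣ a * x ^ 2 + b * x + c ↔
    ∃ s : ℤ, n ∣ s ^ 2 - (b ^ 2 - 4 * a * c) ∧ n ∣ 2 * a * x - (-b + s)

/-! Completing the square, `4a·q(x) = (2ax + b)² − d`, gives one direction with `s = 2ax + b`.
Conversely `(2ax + b)² ≡ s² ≡ d (mod n)` shows `n ∣ 4a·q(x)`, and `4a` is a unit mod `n`. -/

section CommRing

variable {R : Type*} [CommRing R] (a b c x : R)

theorem four_mul_quadratic_eq_sq_sub_discrim :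
    4 * a * (a * x ^ 2 + b * x + c) = (2 * a * x + b) ^ 2 - (b ^ 2 - 4 * a * c) := by
  ring

variable {a b c x} {n : R}

theorem exists_sqrt_discrim_of_dvd_quadratic (hq : n ∣ a * x ^ 2 + b * x + c) :
    ∃ s : R, n ∣ s ^ 2 - (b ^ 2 - 4 * a * c) ∧ n ∣ 2 * a * x - (-b + s) := by
  refine ⟨2 * a * x + b, ?_, by simp⟩
  rw [← four_mul_quadratic_eq_sq_sub_discrim]
  exact hq.mul_left _

theorem dvd_four_mul_quadratic_of_sqrt_discrim {s : R} (hs : n ∣ s ^ 2 - (b ^ 2 - 4 * a * c))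
    (hx : n ∣ 2 * a * x - (-b + s)) : n ∣ 4 * a * (a * x ^ 2 + b * x + c) := by
  have hfactor : 4 * a * (a * x ^ 2 + b * x + c) =
      (2 * a * x - (-b + s)) * (2 * a * x + b + s) + (s ^ 2 - (b ^ 2 - 4 * a * c)) := by
    ring
  rw [hfactor]
  exact dvd_add (hx.mul_right _) hs

theorem IsCoprime.four_mul_of_two_mul (h : IsCoprime (2 * a) n) : IsCoprime (4 * a) n := by
  have h4 : (4 : R) * a = 2 * (2 * a) := by ring
  rw [h4]
  exact h.of_mul_left_left.mul_left h

end CommRing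

theorem iqf_of_coprime_general (a b c n : ℤ)
    (h : Int.gcd (2 * a) n = 1) : IQF a b c n := by
  have hunit : IsCoprime (4 * a) n :=
    (Int.isCoprime_iff_gcd_eq_one.mpr h).four_mul_of_two_mul
  intro x
  refine ⟨exists_sqrt_discrim_of_dvd_quadratic, ?_⟩
  rintro ⟨s, hs, hx⟩
  exact hunit.symm.dvd_of_dvd_mul_left (dvd_four_mul_quadratic_of_sqrt_discrim hs hx)

/-- The exact form of the quadratic formula: if `gcd(2a, n) = 1` then IQF is valid. -/
theorem iqf_of_coprime (a b c n : ℤ) (ha : a ≠ 0) (hn : 2 ≤ n)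
    (h : Int.gcd (2 * a) n = 1) : IQF a b c n :=
  iqf_of_coprime_general a b c n h
end

section
/- Let a, b, c, n be integers with a ≠ 0 and n ≥ 2, and let q(x) = a·x² + b·x + c. IQF is valid for q(x) ≡ 0 (mod n) if and only if for every integer x, n divides 4·a·q(x) exactly when n divides q(x). -/
section CommRing

variable {R : Type*} [CommRing R]

theorem exists_dvd_sq_sub_and_dvd_sub_iff {n d t : R} :
    (∃ s, n ∣ s ^ 2 - d ∧ n ∣ t - s) ↔ n ∣ t ^ 2 - d := by
  refine ⟨fun ⟨s, hs, hts⟩ ↦ ?_, fun ht ↦ ⟨t, ht, by simp⟩⟩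
  have hsplit : t ^ 2 - d = (t - s) * (t + s) + (s ^ 2 - d) := by ring
  rw [hsplit]
  exact dvd_add (dvd_mul_of_dvd_left hts _) hs

theorem sq_two_mul_add_sub_discrim (a b c x : R) :
    (2 * a * x + b) ^ 2 - discrim a b c = 4 * a * (a * x ^ 2 + b * x + c) := by
  rw [discrim]
  ring

end CommRing

theorem iqf_iff_four_a_general (a b c n : ℤ) :
    IQF a b c n ↔
      ∀ x : ℤ, n ∣ 4 * a * (a * x ^ 2 + b * x + c) ↔ n ∣ a * x ^ 2 + b * x + c := by
  have hroot (x : ℤ) : (∃ s, n ∣ s ^ 2 - (b ^ 2 - 4 * a * c) ∧ n ∣ 2 * a * x - (-b + s)) ↔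
      n ∣ 4 * a * (a * x ^ 2 + b * x + c) := by
    simp only [sub_add_eq_sub_sub, sub_neg_eq_add]
    rw [exists_dvd_sq_sub_and_dvd_sub_iff, ← sq_two_mul_add_sub_discrim, discrim]
  exact forall_congr' fun x ↦ by rw [hroot x]; exact Iff.comm

/-- Statement (3.1) of the paper. -/
theorem iqf_iff_four_a (a b c n : ℤ) (ha : a ≠ 0) (hn : 2 ≤ n) :
    IQF a b c n ↔
      ∀ x : ℤ, n ∣ 4 * a * (a * x ^ 2 + b * x + c) ↔ n ∣ a * x ^ 2 + b * x + c :=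
  iqf_iff_four_a_general a b c n
end

section
/- Let a and n be integers with a ≠ 0 and n ≥ 2, let r = gcd(a, n), let k be the multiplicity of 2 in n/r, and write n = 2^k·r·m with m odd. Then for every integer z: if k = 0, 1, or 2, then n divides 4·a·z if and only if m divides z; and if k ≥ 3, then n divides 4·a·z if and only if 2^{k−2}·m divides z. -/
/-!
Cancelling `r = gcd(a, n)` leaves `a / r` coprime to `n / r = 2 ^ k * m`, so `n ∣ 4 * a * z` iff
`2 ^ k * m ∣ 4 * z`. The odd part `m` must then divide `z`, while the factor `4` absorbs up to two
of the `k` factors of `2`.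
-/

theorem Int.dvd_mul_iff_div_gcd_dvd {a n : ℤ} (ha : a ≠ 0) (x : ℤ) :
    n ∣ a * x ↔ n / (Int.gcd a n : ℤ) ∣ x := by
  have hg : 0 < Int.gcd a n := Int.gcd_pos_of_ne_zero_left n ha
  set g : ℤ := (Int.gcd a n : ℤ)
  have hcop : IsCoprime (a / g) (n / g) :=
    Int.isCoprime_iff_gcd_eq_one.mpr (Int.gcd_div_gcd_div_gcd hg)
  have hga : g * (a / g) = a := Int.mul_ediv_cancel' (Int.gcd_dvd_left a n)
  have hgn : g * (n / g) = n := Int.mul_ediv_cancel' (Int.gcd_dvd_right a n)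
  conv_lhs => rw [← hga, ← hgn, mul_assoc, mul_dvd_mul_iff_left (by positivity)]
  exact ⟨hcop.symm.dvd_of_dvd_mul_left, fun h => h.mul_left _⟩

/-- The subtraction `k - 2` is truncated: for `k ≤ 2` the right-hand side is `m ∣ z`. -/
theorem Int.two_pow_mul_dvd_four_mul_iff {m : ℤ} (hm : Odd m) (k : ℕ) (z : ℤ) :
    2 ^ k * m ∣ 4 * z ↔ 2 ^ (k - 2) * m ∣ z := by
  rcases le_total k 2 with hk | hk
  · rw [Nat.sub_eq_zero_of_le hk, pow_zero, one_mul]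
    refine ⟨fun h => ?_, fun h => mul_dvd_mul (?_ : (2 : ℤ) ^ k ∣ 2 ^ 2) h⟩
    · have h4m : IsCoprime ((2 : ℤ) ^ 2) m := (Int.isCoprime_two_left.mpr hm).pow_left
      exact h4m.symm.dvd_of_dvd_mul_left ((dvd_mul_left m _).trans h)
    · exact pow_dvd_pow 2 hk
  · rw [← Nat.sub_add_cancel hk, pow_add, Nat.add_sub_cancel, mul_comm (2 ^ (k - 2) : ℤ),
      mul_assoc, show (2 : ℤ) ^ 2 = 4 by norm_num, mul_dvd_mul_iff_left four_ne_zero]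

theorem lemma_3_1_general (a n r m : ℤ) (k : ℕ) (ha : a ≠ 0)
    (hr : r = Int.gcd a n)
    (hnm : n = 2 ^ k * r * m) (hmodd : Odd m) :
    ∀ z : ℤ,
      (k ≤ 2 → (n ∣ 4 * a * z ↔ m ∣ z)) ∧
      (3 ≤ k → (n ∣ 4 * a * z ↔ 2 ^ (k - 2) * m ∣ z)) := by
  have hr0 : r ≠ 0 := hr ▸ Int.natCast_ne_zero.mpr (Int.gcd_pos_of_ne_zero_left n ha).ne'
  have hnr : n / r = 2 ^ k * m := by
    rw [hnm, mul_right_comm, Int.mul_ediv_cancel _ hr0]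
  have hdvd_iff (z : ℤ) : n ∣ 4 * a * z ↔ 2 ^ (k - 2) * m ∣ z := by
    rw [mul_comm 4 a, mul_assoc, Int.dvd_mul_iff_div_gcd_dvd ha, ← hr, hnr,
      Int.two_pow_mul_dvd_four_mul_iff hmodd]
  intro z
  refine ⟨fun hk => ?_, fun _ => hdvd_iff z⟩
  rw [hdvd_iff, Nat.sub_eq_zero_of_le hk, pow_zero, one_mul]

/-- Paper's Lemma 3.1. -/
theorem lemma_3_1 (a n r m : ℤ) (k : ℕ) (ha : a ≠ 0) (hn : 2 ≤ n)
    (hr : r = Int.gcd a n) (hk : k = padicValInt 2 (n / r))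
    (hnm : n = 2 ^ k * r * m) (hmodd : Odd m) :
    ∀ z : ℤ,
      (k ≤ 2 → (n ∣ 4 * a * z ↔ m ∣ z)) ∧
      (3 ≤ k → (n ∣ 4 * a * z ↔ 2 ^ (k - 2) * m ∣ z)) :=
  lemma_3_1_general a n r m k ha hr hnm hmodd
end

section
/- Let a, b, c, n be integers with a ≠ 0 and n ≥ 2, let q(x) = a·x² + b·x + c, let r = gcd(a, n), let k be the multiplicity of 2 in n/r, and write n = 2^k·r·m with m odd. Define M = m if k = 0, 1, or 2, and M = 2^{k−2}·m if k ≥ 3. Then IQF is valid for q(x) ≡ 0 (mod n) if and only if {x ∈ ℤ : q(x) ≡ 0 (mod M)} = {x ∈ ℤ : q(x) ≡ 0 (mod n)}. -/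
theorem dvd_four_mul_quadratic_iff_exists_sqrt_discrim {R : Type*} [CommRing R]
    (a b c n x : R) :
    n ∣ 4 * a * (a * x ^ 2 + b * x + c) ↔
      ∃ s, n ∣ s ^ 2 - (b ^ 2 - 4 * a * c) ∧ n ∣ 2 * a * x - (-b + s) := by
  constructor
  · intro h
    refine ⟨2 * a * x + b, ?_, ?_⟩
    · rwa [show (2 * a * x + b) ^ 2 - (b ^ 2 - 4 * a * c) = 4 * a * (a * x ^ 2 + b * x + c) by
        ring]
    · rw [show 2 * a * x - (-b + (2 * a * x + b)) = 0 by ring]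
      exact dvd_zero n
  · rintro ⟨s, hs, hx⟩
    have key : 4 * a * (a * x ^ 2 + b * x + c) =
        (s ^ 2 - (b ^ 2 - 4 * a * c)) + (2 * a * x - (-b + s)) * (2 * a * x + b + s) := by
      ring
    rw [key]
    exact dvd_add hs (hx.mul_right _)

theorem dvd_mul_iff_of_eq_gcd_mul {α : Type*} [CommMonoidWithZero α] [GCDMonoid α]
    {a n n' y : α} (ha : a ≠ 0) (hn : n = gcd n a * n') : n ∣ a * y ↔ n' ∣ y := by
  have hg : gcd n a ≠ 0 := fun h ↦ ha ((gcd_eq_zero_iff n a).mp h).2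
  rw [← dvd_gcd_mul_iff_dvd_mul]
  nth_rewrite 1 [hn]
  exact mul_dvd_mul_iff_left hg

theorem pow_mul_dvd_pow_mul_iff {R : Type*} [CommRing R] [IsDomain R] {p m y : R}
    (hp : p ≠ 0) (hpm : IsCoprime p m) (k j : ℕ) :
    p ^ k * m ∣ p ^ j * y ↔ p ^ (k - j) * m ∣ y := by
  constructor
  · intro h
    have hmy : m ∣ y := hpm.pow_left.symm.dvd_of_dvd_mul_left ((dvd_mul_left m _).trans h)
    have hpy : p ^ (k - j) ∣ y := by
      rcases le_total k j with hkj | hjk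
      · simp [Nat.sub_eq_zero_of_le hkj]
      · refine (mul_dvd_mul_iff_left (pow_ne_zero j hp)).mp ?_
        rw [← pow_add, Nat.add_sub_cancel' hjk]
        exact (dvd_mul_right _ m).trans h
    exact hpm.pow_left.mul_dvd hpy hmy
  · intro h
    calc p ^ k * m ∣ p ^ (j + (k - j)) * m := mul_dvd_mul_right (pow_dvd_pow p (by omega)) m
      _ = p ^ j * (p ^ (k - j) * m) := by ring
      _ ∣ p ^ j * y := mul_dvd_mul_left _ h

theorem iqf_iff_sets_eq_general (a b c n r m : ℤ) (k : ℕ) (ha : a ≠ 0)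
    (hr : r = Int.gcd a n)
    (hnm : n = 2 ^ k * r * m) (hmodd : Odd m) :
    IQF a b c n ↔
      {x : ℤ | (if k ≤ 2 then m else 2 ^ (k - 2) * m) ∣ a * x ^ 2 + b * x + c} =
        {x : ℤ | n ∣ a * x ^ 2 + b * x + c} := by
  have hM : (if k ≤ 2 then m else 2 ^ (k - 2) * m) = 2 ^ (k - 2) * m := by
    split_ifs with hk
    · simp [Nat.sub_eq_zero_of_le hk]
    · rfl
  have hdvd : ∀ y, n ∣ 4 * a * y ↔ 2 ^ (k - 2) * m ∣ y := fun y ↦ by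
    have hn : n = gcd n a * (2 ^ k * m) := by
      rw [← Int.coe_gcd, Int.gcd_comm, ← hr, hnm]; ring
    rw [mul_comm 4, mul_assoc, dvd_mul_iff_of_eq_gcd_mul ha hn,
      ← pow_mul_dvd_pow_mul_iff two_ne_zero (Int.isCoprime_two_left.mpr hmodd) k 2]
    norm_num
  simp only [IQF, Set.ext_iff, Set.mem_ofPred_eq, hM, ← hdvd,
    dvd_four_mul_quadratic_iff_exists_sqrt_discrim]
  exact ⟨fun h x ↦ (h x).symm, fun h x ↦ (h x).symm⟩

/-- The reduction `IQF ↔ Q = T` of Section 3 of the paper. -/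
theorem iqf_iff_sets_eq (a b c n r m : ℤ) (k : ℕ) (ha : a ≠ 0) (hn : 2 ≤ n)
    (hr : r = Int.gcd a n) (hk : k = padicValInt 2 (n / r))
    (hnm : n = 2 ^ k * r * m) (hmodd : Odd m) :
    IQF a b c n ↔
      {x : ℤ | (if k ≤ 2 then m else 2 ^ (k - 2) * m) ∣ a * x ^ 2 + b * x + c} =
        {x : ℤ | n ∣ a * x ^ 2 + b * x + c} :=
  iqf_iff_sets_eq_general a b c n r m k ha hr hnm hmodd
end

section
/- Let a, b, c be integers with a ≠ 0, let q(x) = a·x² + b·x + c, and let u, v be positive integers. Put Q₀ = {x ∈ ℤ : q(x) ≡ 0 (mod u·v)}, Q₁ = {x ∈ ℤ : q(x) ≡ 0 (mod v)}, S₀ = {x ∈ Q₀ : 0 ≤ x < u·v}, and S₁ = {x ∈ Q₁ : 0 ≤ x < v}. Then Q₁ is nonempty and Q₁ = Q₀ if and only if S₁ is nonempty and S₀ = {s + j·v : s ∈ S₁, j ∈ {0, 1, …, u − 1}}. -/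
/-!
Whether `n ∣ a x² + b x + c` depends only on `x mod n`, so `Q₁` is `v`-periodic and `Q₀` is
`u v`-periodic. A periodic set is nonempty iff it meets one period window, and two `u v`-periodic
sets agree iff they agree on `[0, u v)`. Finally `{s + j v : s ∈ S₁, 0 ≤ j < u}` is exactly
`Q₁ ∩ [0, u v)`, so condition (b) says that `Q₀` and `Q₁` agree on `[0, u v)`.
-/

namespace Function.Periodic

section Window

variable {α : Type*} [AddCommGroup α] [LinearOrder α] [IsOrderedAddMonoid α] [Archimedean α]
  {P R : α → Prop} {c : α}

theorem setOf_nonempty_iff_window (hP : Periodic P c) (hc : 0 < c) :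
    {x | P x}.Nonempty ↔ {x | P x ∧ 0 ≤ x ∧ x < c}.Nonempty := by
  constructor
  · rintro ⟨x, hx⟩
    obtain ⟨y, ⟨hy0, hyc⟩, hxy⟩ := hP.exists_mem_Ico₀ hc x
    exact ⟨y, hxy ▸ hx, hy0, hyc⟩
  · rintro ⟨x, hx, -⟩
    exact ⟨x, hx⟩

theorem setOf_eq_iff_window (hP : Periodic P c) (hR : Periodic R c) (hc : 0 < c) :
    {x | P x} = {x | R x} ↔ {x | P x ∧ 0 ≤ x ∧ x < c} = {x | R x ∧ 0 ≤ x ∧ x < c} := by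
  simp only [Set.ext_iff, Set.mem_ofPred_eq]
  constructor
  · intro h x
    rw [h x]
  · intro h x
    have hPR : Periodic (fun x => P x ↔ R x) c := fun x => by simp only [hP x, hR x]
    obtain ⟨y, ⟨hy0, hyc⟩, hxy⟩ := hPR.exists_mem_Ico₀ hc x
    rw [hxy]
    simpa [hy0, hyc] using h y

end Window

theorem setOf_add_mul_eq_window {P : ℤ → Prop} {n : ℤ} (hP : Periodic P n) (hn : 0 < n) (m : ℤ) :
    {y | ∃ s, (P s ∧ 0 ≤ s ∧ s < n) ∧ ∃ j, 0 ≤ j ∧ j < m ∧ y = s + j * n} =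
      {y | P y ∧ 0 ≤ y ∧ y < m * n} := by
  ext y
  simp only [Set.mem_ofPred_eq]
  constructor
  · rintro ⟨s, ⟨hs, hs0, hsn⟩, j, hj0, hjm, rfl⟩
    exact ⟨(hP.int_mul j s).symm ▸ hs, by nlinarith, by nlinarith⟩
  · rintro ⟨hy, hy0, hym⟩
    refine ⟨y % n, ⟨?_, Int.emod_nonneg y hn.ne', Int.emod_lt_of_pos y hn⟩,
      y / n, Int.ediv_nonneg hy0 hn.le, Int.ediv_lt_of_lt_mul hn hym, ?_⟩
    · have hshift := hP.int_mul (y / n) (y % n)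
      rw [Int.cast_id, Int.emod_add_ediv_mul] at hshift
      rwa [← hshift]
    · exact (Int.emod_add_ediv_mul y n).symm

end Function.Periodic

theorem periodic_dvd_quadratic (a b c n : ℤ) :
    Function.Periodic (fun x => n ∣ a * x ^ 2 + b * x + c) n := by
  intro x
  have hshift : a * (x + n) ^ 2 + b * (x + n) + c =
      a * x ^ 2 + b * x + c + n * (a * (2 * x + n) + b) := by ring
  simp only [hshift, dvd_add_left (dvd_mul_right n _)]

theorem lemma_3_2_a_iff_b_general (a b c u v : ℤ) (hu : 0 < u) (hv : 0 < v) :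
    (({x : ℤ | v ∣ a * x ^ 2 + b * x + c}).Nonempty ∧
      {x : ℤ | v ∣ a * x ^ 2 + b * x + c} = {x : ℤ | u * v ∣ a * x ^ 2 + b * x + c}) ↔
    (({x : ℤ | v ∣ a * x ^ 2 + b * x + c ∧ 0 ≤ x ∧ x < v}).Nonempty ∧
      {x : ℤ | u * v ∣ a * x ^ 2 + b * x + c ∧ 0 ≤ x ∧ x < u * v} =
        {y : ℤ | ∃ s : ℤ, (v ∣ a * s ^ 2 + b * s + c ∧ 0 ≤ s ∧ s < v) ∧
          ∃ j : ℤ, 0 ≤ j ∧ j < u ∧ y = s + j * v}) := by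
  have hQ₁ := periodic_dvd_quadratic a b c v
  have hQ₀ := periodic_dvd_quadratic a b c (u * v)
  rw [hQ₁.setOf_add_mul_eq_window hv u]
  exact and_congr (hQ₁.setOf_nonempty_iff_window hv)
    (((hQ₁.int_mul u).setOf_eq_iff_window hQ₀ (mul_pos hu hv)).trans eq_comm)

/-- Equivalence (a) ⟺ (b) of the paper's Lemma 3.2. -/
theorem lemma_3_2_a_iff_b (a b c u v : ℤ) (ha : a ≠ 0) (hu : 0 < u) (hv : 0 < v) :
    (({x : ℤ | v ∣ a * x ^ 2 + b * x + c}).Nonempty ∧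
      {x : ℤ | v ∣ a * x ^ 2 + b * x + c} = {x : ℤ | u * v ∣ a * x ^ 2 + b * x + c}) ↔
    (({x : ℤ | v ∣ a * x ^ 2 + b * x + c ∧ 0 ≤ x ∧ x < v}).Nonempty ∧
      {x : ℤ | u * v ∣ a * x ^ 2 + b * x + c ∧ 0 ≤ x ∧ x < u * v} =
        {y : ℤ | ∃ s : ℤ, (v ∣ a * s ^ 2 + b * s + c ∧ 0 ≤ s ∧ s < v) ∧
          ∃ j : ℤ, 0 ≤ j ∧ j < u ∧ y = s + j * v}) :=
  lemma_3_2_a_iff_b_general a b c u v hu hv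
end

section
/- Let a, b, c, n be integers with a ≠ 0 and n ≥ 2, let q(x) = a·x² + b·x + c and d = b² − 4·a·c. The congruence q(x) ≡ 0 (mod n) has no integer solution if and only if either (a) d is not a quadratic residue of 4·a·n, or (b) d is a quadratic residue of 4·a·n and there exists a prime factor p of 2·a such that, with α = μ_p(4·a·n) and β = μ_p(2·a): 1 < β < α, p divides b, p² divides d, and (p^α, p^β) forms a (b, d)-obstruction. -/
/-- `(p^α, p^β)` forms a `(b, d)`-obstruction (paper's Definition 3.4):
either condition (iii) or condition (iv) of Proposition 3.3 holds. -/
def Obstruction (p α β : ℕ) (b d : ℤ) : Prop :=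
  (¬ (p : ℤ) ^ α ∣ d ∧
    ∃ μ : ℕ, padicValInt p d = 2 * μ ∧
      ∀ σ : ℤ, 0 ≤ σ → σ < (p : ℤ) ^ (α - 2 * μ) →
        (p : ℤ) ^ (α - 2 * μ) ∣ σ ^ 2 - d / (p : ℤ) ^ (2 * μ) →
        ∀ i : ℕ, i < p ^ μ →
          ¬ (p : ℤ) ^ β ∣ σ * (p : ℤ) ^ μ + (i : ℤ) * (p : ℤ) ^ (α - μ) - b) ∨
  ((p : ℤ) ^ α ∣ d ∧
    ∃ s : ℕ, (α = 2 * s ∨ α = 2 * s - 1) ∧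
      ∀ i : ℕ, i < p ^ (α - s) → ¬ (p : ℤ) ^ β ∣ (i : ℤ) * (p : ℤ) ^ s - b)

/-!
Completing the square, `x` solves `n ∣ a x² + b x + c` iff `y = 2 a x + b` satisfies
`y² ≡ d [ZMOD 4 a n]` and `y ≡ b [ZMOD 2 a]`; by the Chinese remainder theorem this splits into
the conditions `y² ≡ d [ZMOD p ^ α]`, `y ≡ b [ZMOD p ^ β]` for each prime `p`, where
`α = v_p(4 a n)` and `β = v_p(2 a)`. Such a local `y`
exists trivially if `β = α` (take `y = b`, as `p ^ β ∣ 4 a c`). If `β ≤ 1` or `p ∤ b`, any square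
root `y` of `d` modulo `p ^ α` has `y ≡ ±b [ZMOD p ^ β]`, so `y` or `-y` works. In the remaining
case the square roots of `d` modulo `p ^ α` are listed explicitly (`i p ^ s` when `p ^ α ∣ d`,
`σ p ^ μ + i p ^ (α - μ)` when `v_p(d) = 2 μ < α`), and an obstruction says exactly that none of
them is `≡ b [ZMOD p ^ β]`.
-/

lemma exists_natCast_lt_dvd_sub (w : ℤ) {m : ℕ} (hm : m ≠ 0) :
    ∃ i : ℕ, i < m ∧ (m : ℤ) ∣ i - w := by
  have hm' : (0 : ℤ) < m := by exact_mod_cast Nat.pos_of_ne_zero hm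
  have h0 := Int.emod_nonneg w hm'.ne'
  have hlt := Int.emod_lt_of_pos w hm'
  refine ⟨(w % m).toNat, by omega, ?_⟩
  rw [Int.toNat_of_nonneg h0]
  exact (Int.mod_modEq w m).symm.dvd

lemma two_pow_dvd_sub_or_two_pow_dvd_add {β : ℕ} {y b : ℤ} (hb : Odd b)
    (h : 2 ^ (β + 1) ∣ y ^ 2 - b ^ 2) : 2 ^ β ∣ y - b ∨ 2 ^ β ∣ y + b := by
  obtain _ | γ := β
  · simp
  obtain ⟨u, rfl⟩ : ∃ u, y = b + 2 * u := by
    have h2 : Even (y ^ 2 - b ^ 2) := even_iff_two_dvd.mpr ((dvd_pow_self 2 (by omega)).trans h)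
    obtain ⟨u, hu⟩ : Even (y - b) := by simpa [Int.even_sub, Int.even_pow] using h2
    exact ⟨u, by linarith⟩
  rw [show (b + 2 * u) ^ 2 - b ^ 2 = 2 ^ 2 * (u * (b + u)) by ring,
    show γ + 1 + 1 = 2 + γ by omega, pow_add, mul_dvd_mul_iff_left (by norm_num)] at h
  rw [show b + 2 * u - b = 2 * u by ring, show b + 2 * u + b = 2 * (b + u) by ring, pow_succ']
  rcases Int.even_or_odd u with hu | hu
  · have hcop : IsCoprime (2 ^ γ) (b + u) := (Int.isCoprime_two_left.mpr (hb.add_even hu)).pow_left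
    exact .inl (mul_dvd_mul_left 2 (hcop.dvd_of_dvd_mul_right h))
  · have hcop : IsCoprime (2 ^ γ) u := (Int.isCoprime_two_left.mpr hu).pow_left
    exact .inr (mul_dvd_mul_left 2 (hcop.dvd_of_dvd_mul_left h))

section Local

variable {p : ℕ} [hp : Fact p.Prime] {α β : ℕ} {b d : ℤ}

lemma padicValInt_le_of_dvd {A M : ℤ} (hM : M ≠ 0) (h : A ∣ M) :
    padicValInt p A ≤ padicValInt p M :=
  ((padicValInt_dvd_iff _ M).mp ((padicValInt_dvd A).trans h)).resolve_left hM

lemma padicValInt_sq {y : ℤ} (hy : y ≠ 0) : padicValInt p (y ^ 2) = 2 * padicValInt p y := by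
  rw [sq, padicValInt.mul hy hy, two_mul]

lemma pow_dvd_sq_iff {s : ℕ} (hs : α = 2 * s ∨ α = 2 * s - 1) {y : ℤ} :
    (p : ℤ) ^ α ∣ y ^ 2 ↔ (p : ℤ) ^ s ∣ y := by
  rcases eq_or_ne y 0 with rfl | hy
  · simp
  rw [padicValInt_dvd_iff, padicValInt_dvd_iff, padicValInt_sq hy]
  simp only [hy, pow_eq_zero_iff, ne_eq, OfNat.ofNat_ne_zero, not_false_eq_true, false_or]
  omega

lemma padicValInt_eq_of_pow_dvd_sub {u : ℤ} (hd : ¬ (p : ℤ) ^ α ∣ d)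
    (h : (p : ℤ) ^ α ∣ u - d) : padicValInt p u = padicValInt p d := by
  have hd0 : d ≠ 0 := by rintro rfl; exact hd (dvd_zero _)
  have hdα : padicValInt p d < α := by
    by_contra! hle
    exact hd ((padicValInt_dvd_iff α d).mpr (Or.inr hle))
  have hlow : (p : ℤ) ^ padicValInt p d ∣ u := by
    simpa using dvd_add ((pow_dvd_pow _ hdα.le).trans h) (padicValInt_dvd d)
  have hu0 : u ≠ 0 := by
    rintro rfl
    exact hd (by simpa using h)
  have hhigh : ¬ (p : ℤ) ^ (padicValInt p d + 1) ∣ u := fun hu => by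
    have := dvd_sub hu ((pow_dvd_pow _ hdα).trans h)
    rw [sub_sub_cancel, padicValInt_dvd_iff] at this
    omega
  rw [padicValInt_dvd_iff] at hlow hhigh
  omega

lemma exists_sqrt_mod_iff_of_pow_dvd (hβα : β ≤ α) (hd : (p : ℤ) ^ α ∣ d) {s : ℕ}
    (hs : α = 2 * s ∨ α = 2 * s - 1) :
    (∃ y : ℤ, (p : ℤ) ^ α ∣ y ^ 2 - d ∧ (p : ℤ) ^ β ∣ y - b) ↔
      ∃ i : ℕ, i < p ^ (α - s) ∧ (p : ℤ) ^ β ∣ (i : ℤ) * (p : ℤ) ^ s - b := by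
  simp only [dvd_sub_left hd, pow_dvd_sq_iff hs]
  constructor
  · rintro ⟨_, ⟨w, rfl⟩, hyb⟩
    obtain ⟨i, hi, hiw⟩ := exists_natCast_lt_dvd_sub w (pow_ne_zero (α - s) hp.out.ne_zero)
    refine ⟨i, hi, ?_⟩
    have hshift : (p : ℤ) ^ α ∣ i * (p : ℤ) ^ s - (p : ℤ) ^ s * w := by
      rw [show α = (α - s) + s by omega, pow_add, show (i : ℤ) * (p : ℤ) ^ s - (p : ℤ) ^ s * w
        = (i - w) * (p : ℤ) ^ s by ring]
      exact mul_dvd_mul (by exact_mod_cast hiw) dvd_rfl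
    simpa using dvd_add ((pow_dvd_pow _ hβα).trans hshift) hyb
  · rintro ⟨i, -, hi⟩
    exact ⟨i * (p : ℤ) ^ s, dvd_mul_left _ _, hi⟩

lemma exists_sqrt_mod_iff_of_padicValInt_eq (hβα : β ≤ α) (hd : ¬ (p : ℤ) ^ α ∣ d) {μ : ℕ}
    (hμ : padicValInt p d = 2 * μ) :
    (∃ y : ℤ, (p : ℤ) ^ α ∣ y ^ 2 - d ∧ (p : ℤ) ^ β ∣ y - b) ↔
      ∃ σ : ℤ, 0 ≤ σ ∧ σ < (p : ℤ) ^ (α - 2 * μ) ∧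
        (p : ℤ) ^ (α - 2 * μ) ∣ σ ^ 2 - d / (p : ℤ) ^ (2 * μ) ∧
        ∃ i : ℕ, i < p ^ μ ∧ (p : ℤ) ^ β ∣ σ * (p : ℤ) ^ μ + (i : ℤ) * (p : ℤ) ^ (α - μ) - b := by
  have hp0 : (p : ℤ) ≠ 0 := by exact_mod_cast hp.out.ne_zero
  have hdμ : (p : ℤ) ^ (2 * μ) ∣ d := hμ ▸ padicValInt_dvd d
  have h2μ : 2 * μ < α := by
    by_contra! h
    exact hd ((pow_dvd_pow _ h).trans hdμ)
  obtain ⟨m, rfl⟩ : ∃ m, α = 2 * μ + m := ⟨α - 2 * μ, by omega⟩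
  obtain ⟨d₁, rfl⟩ := hdμ
  rw [show 2 * μ + m - 2 * μ = m by omega, show 2 * μ + m - μ = μ + m by omega,
    Int.mul_ediv_cancel_left _ (pow_ne_zero _ hp0)]
  have hroot (z : ℤ) : (p : ℤ) ^ (2 * μ + m) ∣ ((p : ℤ) ^ μ * z) ^ 2 - (p : ℤ) ^ (2 * μ) * d₁ ↔
      (p : ℤ) ^ m ∣ z ^ 2 - d₁ := by
    rw [pow_add, show ((p : ℤ) ^ μ * z) ^ 2 - (p : ℤ) ^ (2 * μ) * d₁
      = (p : ℤ) ^ (2 * μ) * (z ^ 2 - d₁) by ring, mul_dvd_mul_iff_left (pow_ne_zero _ hp0)]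
  constructor
  · rintro ⟨y, hy, hyb⟩
    have hyμ : (p : ℤ) ^ μ ∣ y := by
      rw [← pow_dvd_sq_iff (Or.inl rfl), ← hμ, ← padicValInt_eq_of_pow_dvd_sub hd hy]
      exact padicValInt_dvd _
    obtain ⟨z, rfl⟩ := hyμ
    rw [hroot] at hy
    obtain ⟨σ, hσ, k, hk⟩ := exists_natCast_lt_dvd_sub z (pow_ne_zero m hp.out.ne_zero)
    obtain ⟨i, hi, hik⟩ := exists_natCast_lt_dvd_sub (-k) (pow_ne_zero μ hp.out.ne_zero)
    push_cast at hk hik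
    refine ⟨σ, by positivity, by exact_mod_cast hσ, ?_, i, hi, ?_⟩
    · rw [show (σ : ℤ) ^ 2 - d₁ = (σ - z) * (σ + z) + (z ^ 2 - d₁) by ring, hk]
      exact dvd_add (dvd_mul_of_dvd_left (dvd_mul_right _ _) _) hy
    · have hshift : (p : ℤ) ^ (2 * μ + m) ∣
          σ * (p : ℤ) ^ μ + i * (p : ℤ) ^ (μ + m) - (p : ℤ) ^ μ * z := by
        rw [show (σ : ℤ) * (p : ℤ) ^ μ + i * (p : ℤ) ^ (μ + m) - (p : ℤ) ^ μ * z
          = (i - -k) * (p : ℤ) ^ (μ + m) by rw [pow_add]; linear_combination (p : ℤ) ^ μ * hk,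
          show 2 * μ + m = μ + (μ + m) by omega, pow_add]
        exact mul_dvd_mul hik dvd_rfl
      simpa using dvd_add ((pow_dvd_pow _ hβα).trans hshift) hyb
  · rintro ⟨σ, -, -, hσ, i, -, hi⟩
    refine ⟨σ * (p : ℤ) ^ μ + i * (p : ℤ) ^ (μ + m), ?_, hi⟩
    rw [show (σ * (p : ℤ) ^ μ + i * (p : ℤ) ^ (μ + m)) ^ 2 - (p : ℤ) ^ (2 * μ) * d₁
      = ((p : ℤ) ^ μ * σ) ^ 2 - (p : ℤ) ^ (2 * μ) * d₁
        + (p : ℤ) ^ (2 * μ + m) * (2 * σ * i + i ^ 2 * (p : ℤ) ^ m) by ring]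
    exact dvd_add ((hroot σ).mpr hσ) (dvd_mul_right _ _)

lemma exists_sqrt_mod_iff_not_obstruction (hβα : β ≤ α) (hqr : ∃ y : ℤ, (p : ℤ) ^ α ∣ y ^ 2 - d) :
    (∃ y : ℤ, (p : ℤ) ^ α ∣ y ^ 2 - d ∧ (p : ℤ) ^ β ∣ y - b) ↔ ¬ Obstruction p α β b d := by
  by_cases hd : (p : ℤ) ^ α ∣ d
  · simp only [Obstruction, hd, not_true_eq_false, false_and, true_and, false_or, not_exists,
      not_and, not_forall, not_not, exists_prop]
    refine ⟨fun h s hs => (exists_sqrt_mod_iff_of_pow_dvd hβα hd hs).mp h, fun h => ?_⟩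
    exact (exists_sqrt_mod_iff_of_pow_dvd hβα hd (s := (α + 1) / 2) (by omega)).mpr
      (h _ (by omega))
  · simp only [Obstruction, hd, not_false_eq_true, true_and, false_and, or_false, not_exists,
      not_and, not_forall, not_not, exists_prop]
    refine ⟨fun h μ hμ => (exists_sqrt_mod_iff_of_padicValInt_eq hβα hd hμ).mp h, fun h => ?_⟩
    obtain ⟨y, hy⟩ := hqr
    have hy0 : y ≠ 0 := by
      rintro rfl
      exact hd (by simpa using hy)
    have hμ : padicValInt p d = 2 * padicValInt p y := by
      rw [← padicValInt_eq_of_pow_dvd_sub hd hy, padicValInt_sq hy0]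
    exact (exists_sqrt_mod_iff_of_padicValInt_eq hβα hd hμ).mpr (h _ hμ)

lemma pow_dvd_sub_or_pow_dvd_add {y : ℤ} (hb : β ≤ 1 ∨ ¬ (p : ℤ) ∣ 2 * b)
    (h : (p : ℤ) ^ β ∣ y ^ 2 - b ^ 2) : (p : ℤ) ^ β ∣ y - b ∨ (p : ℤ) ^ β ∣ y + b := by
  have hprime : Prime (p : ℤ) := Nat.prime_iff_prime_int.mp hp.out
  rw [show y ^ 2 - b ^ 2 = (y - b) * (y + b) by ring] at h
  by_cases hsub : (p : ℤ) ∣ y - b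
  · by_cases hadd : (p : ℤ) ∣ y + b
    · have h2b : (p : ℤ) ∣ 2 * b := by
        simpa [two_mul] using dvd_sub hadd hsub
      rcases hb with hβ | hb
      · exact .inl ((pow_dvd_pow _ hβ).trans (by simpa using hsub))
      · exact absurd h2b hb
    · exact .inl ((hprime.coprime_iff_not_dvd.mpr hadd).pow_left.dvd_of_dvd_mul_right h)
  · exact .inr ((hprime.coprime_iff_not_dvd.mpr hsub).pow_left.dvd_of_dvd_mul_left h)

lemma exists_sqrt_mod_of_le_one_or_not_dvd (hβα : β < α) (hbd : 2 * (p : ℤ) ^ β ∣ b ^ 2 - d)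
    (hb : β ≤ 1 ∨ ¬ (p : ℤ) ∣ b) {y : ℤ} (hy : (p : ℤ) ^ α ∣ y ^ 2 - d) :
    ∃ y : ℤ, (p : ℤ) ^ α ∣ y ^ 2 - d ∧ (p : ℤ) ^ β ∣ y - b := by
  have hyb (k : ℕ) (hkα : k ≤ α) (hk : (p : ℤ) ^ k ∣ b ^ 2 - d) : (p : ℤ) ^ k ∣ y ^ 2 - b ^ 2 := by
    simpa using dvd_sub ((pow_dvd_pow _ hkα).trans hy) hk
  have hsign : (p : ℤ) ^ β ∣ y - b ∨ (p : ℤ) ^ β ∣ y + b := by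
    by_cases h2b : β ≤ 1 ∨ ¬ (p : ℤ) ∣ 2 * b
    · exact pow_dvd_sub_or_pow_dvd_add h2b (hyb β hβα.le ((dvd_mul_left _ 2).trans hbd))
    -- `p ∣ 2 * b` but `p ∤ b` forces `p = 2`; then the factor `2` in `hbd` gives `2 ^ (β + 1)`
    obtain ⟨hβ, hp2b⟩ := not_or.mp h2b
    have hpb : ¬ (p : ℤ) ∣ b := fun h => hb.elim hβ (not_not.mpr h)
    have hp2 : (p : ℤ) = 2 := by
      have hprime : Prime (p : ℤ) := Nat.prime_iff_prime_int.mp hp.out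
      have hp2 : (p : ℤ) ∣ 2 := (hprime.dvd_mul.mp (not_not.mp hp2b)).resolve_right hpb
      exact_mod_cast (Nat.prime_dvd_prime_iff_eq hp.out Nat.prime_two).mp (by exact_mod_cast hp2)
    rw [hp2] at hpb hbd hyb ⊢
    exact two_pow_dvd_sub_or_two_pow_dvd_add (Int.not_even_iff_odd.mp (by rwa [even_iff_two_dvd]))
      (hyb (β + 1) hβα (by rwa [pow_succ']))
  rcases hsign with h | h
  · exact ⟨y, hy, h⟩
  · exact ⟨-y, by simpa using hy, by rw [show -y - b = -(y + b) by ring]; exact h.neg_right⟩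

lemma exists_sqrt_mod_iff (hβα : β ≤ α) (hbd : 2 * (p : ℤ) ^ β ∣ b ^ 2 - d) :
    (∃ y : ℤ, (p : ℤ) ^ α ∣ y ^ 2 - d ∧ (p : ℤ) ^ β ∣ y - b) ↔
      (∃ y : ℤ, (p : ℤ) ^ α ∣ y ^ 2 - d) ∧
        ¬ (1 < β ∧ β < α ∧ (p : ℤ) ∣ b ∧ (p : ℤ) ^ 2 ∣ d ∧ Obstruction p α β b d) := by
  refine ⟨fun h => ⟨?_, ?_⟩, fun ⟨⟨y, hy⟩, hno⟩ => ?_⟩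
  · exact h.imp fun _ => And.left
  · rintro ⟨-, -, -, -, hobs⟩
    exact (exists_sqrt_mod_iff_not_obstruction hβα (h.imp fun _ => And.left)).mp h hobs
  have hbd' : (p : ℤ) ^ β ∣ b ^ 2 - d := (dvd_mul_left _ 2).trans hbd
  rcases hβα.eq_or_lt with rfl | hβα
  · exact ⟨b, hbd', by simp⟩
  by_cases hb : 1 < β ∧ (p : ℤ) ∣ b
  · have hp2d : (p : ℤ) ^ 2 ∣ d := by
      simpa using dvd_sub (pow_dvd_pow_of_dvd hb.2 2) ((pow_dvd_pow _ hb.1).trans hbd')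
    exact (exists_sqrt_mod_iff_not_obstruction hβα.le ⟨y, hy⟩).mpr
      fun hobs => hno ⟨hb.1, hβα, hb.2, hp2d, hobs⟩
  · exact exists_sqrt_mod_of_le_one_or_not_dvd hβα hbd
      ((not_and_or.mp hb).imp_left Nat.le_of_not_lt) hy

end Local

lemma exists_forall_prime_pow_padicValInt_dvd_sub {M : ℤ} (hM : M ≠ 0) (y : ℕ → ℤ) :
    ∃ Y : ℤ, ∀ p : ℕ, p.Prime → (p : ℤ) ^ padicValInt p M ∣ Y - y p := by
  have hcop : Pairwise (Function.onFun IsCoprime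
      fun q : M.natAbs.primeFactors => Ideal.span {(q : ℤ) ^ padicValInt q M}) := by
    intro q r hqr
    simp only [Function.onFun, Ideal.isCoprime_span_singleton_iff]
    exact_mod_cast Nat.isCoprime_iff_coprime.mpr (Nat.coprime_pow_primes _ _
      (Nat.prime_of_mem_primeFactors q.2) (Nat.prime_of_mem_primeFactors r.2)
      (Subtype.coe_ne_coe.mpr hqr))
  obtain ⟨Y, hY⟩ := Ideal.exists_forall_sub_mem_ideal hcop fun q => y q
  refine ⟨Y, fun p hp => ?_⟩
  by_cases hpM : p ∈ M.natAbs.primeFactors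
  · simpa [Ideal.mem_span_singleton] using hY ⟨p, hpM⟩
  · have hpM : ¬ (p : ℤ) ∣ M := by
      simpa [Int.natCast_dvd, hp, hM] using hpM
    simp [padicValInt.eq_zero_of_not_dvd hpM]

lemma dvd_of_forall_prime_pow_padicValInt_dvd {m z : ℤ} (hm : m ≠ 0)
    (h : ∀ p : ℕ, p.Prime → (p : ℤ) ^ padicValInt p m ∣ z) : m ∣ z := by
  rcases eq_or_ne z 0 with rfl | hz
  · exact dvd_zero m
  rw [← Int.natAbs_dvd_natAbs, ← Nat.factorization_prime_le_iff_dvd (Int.natAbs_ne_zero.mpr hm)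
    (Int.natAbs_ne_zero.mpr hz)]
  intro p hp
  have := Fact.mk hp
  rw [Nat.factorization_def _ hp, Nat.factorization_def _ hp]
  exact ((padicValInt_dvd_iff _ z).mp (h p hp)).resolve_left hz

lemma exists_sq_sub_dvd_iff_forall_prime {M A : ℤ} (hM : M ≠ 0) (hAM : A ∣ M) (b d : ℤ) :
    (∃ y : ℤ, M ∣ y ^ 2 - d ∧ A ∣ y - b) ↔
      ∀ p : ℕ, p.Prime → ∃ y : ℤ,
        (p : ℤ) ^ padicValInt p M ∣ y ^ 2 - d ∧ (p : ℤ) ^ padicValInt p A ∣ y - b := by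
  refine ⟨fun ⟨y, hy, hyb⟩ p _ =>
    ⟨y, (padicValInt_dvd M).trans hy, (padicValInt_dvd A).trans hyb⟩, fun h => ?_⟩
  choose! y hy hyb using h
  obtain ⟨Y, hY⟩ := exists_forall_prime_pow_padicValInt_dvd_sub hM y
  have hA : A ≠ 0 := by
    rintro rfl
    exact hM (zero_dvd_iff.mp hAM)
  refine ⟨Y, dvd_of_forall_prime_pow_padicValInt_dvd hM fun p hp => ?_,
    dvd_of_forall_prime_pow_padicValInt_dvd hA fun p hp => ?_⟩
  · rw [show Y ^ 2 - d = (Y - y p) * (Y + y p) + (y p ^ 2 - d) by ring]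
    exact dvd_add (dvd_mul_of_dvd_left (hY p hp) _) (hy p hp)
  · have := Fact.mk hp
    simpa using dvd_add ((pow_dvd_pow _ (padicValInt_le_of_dvd hM hAM)).trans (hY p hp)) (hyb p hp)

lemma exists_dvd_quadratic_iff {a : ℤ} (ha : a ≠ 0) (b c n : ℤ) :
    (∃ x : ℤ, n ∣ a * x ^ 2 + b * x + c) ↔
      ∃ y : ℤ, 4 * a * n ∣ y ^ 2 - (b ^ 2 - 4 * a * c) ∧ 2 * a ∣ y - b := by
  have hsq (x : ℤ) :
      (2 * a * x + b) ^ 2 - (b ^ 2 - 4 * a * c) = 4 * a * (a * x ^ 2 + b * x + c) := by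
    ring
  constructor
  · rintro ⟨x, hx⟩
    exact ⟨2 * a * x + b, hsq x ▸ mul_dvd_mul_left (4 * a) hx, ⟨x, by ring⟩⟩
  · rintro ⟨y, hy, x, hx⟩
    rw [sub_eq_iff_eq_add.mp hx, hsq] at hy
    exact ⟨x, (mul_dvd_mul_iff_left (by simpa using ha : 4 * a ≠ 0)).mp hy⟩

lemma isQR_iff_forall_prime {v : ℤ} (hv : v ≠ 0) (u : ℤ) :
    IsQR v u ↔ ∀ p : ℕ, p.Prime → ∃ y : ℤ, (p : ℤ) ^ padicValInt p v ∣ y ^ 2 - u := by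
  simpa [IsQR] using exists_sq_sub_dvd_iff_forall_prime hv (one_dvd v) 0 u

lemma exists_dvd_quadratic_iff_forall_prime {a : ℤ} (ha : a ≠ 0) (b c : ℤ) {n : ℤ} (hn : n ≠ 0) :
    (∃ x : ℤ, n ∣ a * x ^ 2 + b * x + c) ↔
      IsQR (4 * a * n) (b ^ 2 - 4 * a * c) ∧
        ∀ p : ℕ, p.Prime → ¬ (1 < padicValInt p (2 * a) ∧
          padicValInt p (2 * a) < padicValInt p (4 * a * n) ∧
          (p : ℤ) ∣ b ∧ (p : ℤ) ^ 2 ∣ b ^ 2 - 4 * a * c ∧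
          Obstruction p (padicValInt p (4 * a * n)) (padicValInt p (2 * a)) b
            (b ^ 2 - 4 * a * c)) := by
  have hM : 4 * a * n ≠ 0 := mul_ne_zero (mul_ne_zero four_ne_zero ha) hn
  have hAM : 2 * a ∣ 4 * a * n := ⟨2 * n, by ring⟩
  rw [exists_dvd_quadratic_iff ha, exists_sq_sub_dvd_iff_forall_prime hM hAM,
    isQR_iff_forall_prime hM, ← forall₂_and]
  refine forall₂_congr fun p hp => ?_
  have := Fact.mk hp
  refine exists_sqrt_mod_iff (padicValInt_le_of_dvd hM hAM) ?_
  rw [sub_sub_cancel]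
  exact (mul_dvd_mul_left 2 (padicValInt_dvd (2 * a))).trans ⟨c, by ring⟩

/-- Paper's Proposition 3.3. -/
theorem no_solutions_iff (a b c n : ℤ) (ha : a ≠ 0) (hn : 2 ≤ n) :
    (¬ ∃ x : ℤ, n ∣ a * x ^ 2 + b * x + c) ↔
      (¬ IsQR (4 * a * n) (b ^ 2 - 4 * a * c)) ∨
      (IsQR (4 * a * n) (b ^ 2 - 4 * a * c) ∧
        ∃ p : ℕ, p.Prime ∧ (p : ℤ) ∣ 2 * a ∧
          1 < padicValInt p (2 * a) ∧
          padicValInt p (2 * a) < padicValInt p (4 * a * n) ∧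
          (p : ℤ) ∣ b ∧ (p : ℤ) ^ 2 ∣ b ^ 2 - 4 * a * c ∧
          Obstruction p (padicValInt p (4 * a * n)) (padicValInt p (2 * a)) b
            (b ^ 2 - 4 * a * c)) := by
  simp_rw [exists_dvd_quadratic_iff_forall_prime ha b c (by omega : n ≠ 0), not_and, not_forall,
    not_not, exists_prop]
  constructor
  · intro h
    by_cases hqr : IsQR (4 * a * n) (b ^ 2 - 4 * a * c)
    · obtain ⟨p, hp, hobs⟩ := h hqr
      exact .inr ⟨hqr, p, hp, (dvd_pow_self _ (zero_lt_one.trans hobs.1).ne').trans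
        (padicValInt_dvd _), hobs⟩
    · exact .inl hqr
  · rintro (hqr | ⟨-, p, hp, -, hobs⟩) hqr'
    · exact absurd hqr' hqr
    · exact ⟨p, hp, hobs⟩
end

section
/- Let a and n be integers with a ≠ 0 and n ≥ 2, let r = gcd(a, n), let k be the multiplicity of 2 in n/r, and write n = 2^k·r·m with m odd. Then: (a) if k = 0, 1, or 2, then Q(n) ∩ Q(4·a) = Q(4·a·m); and (b) if k ≥ 3, then Q(n) ∩ Q(4·a) = Q(2^k·a·m). -/
lemma nat_coprime_div_gcd_pow (R M : ℕ) (hR : 0 < R) (hM : 0 < M) :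
    Nat.Coprime M (R / Nat.gcd R (M ^ R)) := by
  set g := Nat.gcd R (M ^ R) with hg
  have hgR : g ∣ R := Nat.gcd_dvd_left _ _
  have hgM : g ∣ M ^ R := Nat.gcd_dvd_right _ _
  have hgpos : 0 < g := Nat.gcd_pos_of_pos_left _ hR
  rw [Nat.coprime_comm]
  by_contra hc
  obtain ⟨p, hp, hpD, hpM⟩ := Nat.Prime.not_coprime_iff_dvd.mp hc
  have hgpR : g * p ∣ R := (Nat.dvd_div_iff_mul_dvd hgR).mp hpD
  have hMR : M ^ R ≠ 0 := pow_ne_zero _ hM.ne'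
  have hgpMR : g * p ∣ M ^ R := by
    rw [← Nat.factorization_le_iff_dvd (Nat.mul_ne_zero hgpos.ne' hp.ne_zero) hMR]
    intro q
    rw [Nat.factorization_mul hgpos.ne' hp.ne_zero, hp.factorization]
    simp only [Finsupp.coe_add, Pi.add_apply, Finsupp.single_apply]
    by_cases hq : p = q
    · subst hq
      have h1 : g.factorization p < g := Nat.factorization_lt p hgpos.ne'
      have h2 : g ≤ R := Nat.le_of_dvd hR hgR
      have h3 : 1 ≤ M.factorization p := Nat.Prime.factorization_pos_of_dvd hp hM.ne' hpM
      have h4 : (M ^ R).factorization p = R * M.factorization p := by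
        rw [Nat.factorization_pow]; rfl
      rw [h4, if_pos rfl]
      calc g.factorization p + 1 ≤ R := by omega
        _ ≤ R * M.factorization p := Nat.le_mul_of_pos_right _ h3
    · rw [if_neg hq]
      have := (Nat.factorization_le_iff_dvd hgpos.ne' hMR).mpr hgM q
      omega
  have hd : g * p ∣ g := Nat.dvd_gcd hgpR hgpMR
  have := Nat.le_of_dvd hgpos hd
  nlinarith [hp.two_le]

lemma isQR_of_dvd {v w u : ℤ} (h : v ∣ w) (H : IsQR w u) : IsQR v u := by
  obtain ⟨x, hx⟩ := H; exact ⟨x, h.trans hx⟩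

lemma isQR_mul {c1 c2 v1 v2 u : ℤ} (h1 : c1 ∣ v1) (h2 : c2 ∣ v2)
    (hco : IsCoprime c1 c2) (H1 : IsQR v1 u) (H2 : IsQR v2 u) :
    IsQR (c1 * c2) u := by
  obtain ⟨x, hx⟩ := H1
  obtain ⟨y, hy⟩ := H2
  obtain ⟨p, q, hpq⟩ := id hco
  set z := x * q * c2 + y * p * c1 with hz
  have hzx : c1 ∣ z - x := ⟨p * (y - x), by rw [hz]; linear_combination x * hpq⟩
  have hzy : c2 ∣ z - y := ⟨q * (x - y), by rw [hz]; linear_combination y * hpq⟩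
  refine ⟨z, hco.mul_dvd ?_ ?_⟩
  · have h : z ^ 2 - u = (z - x) * (z + x) + (x ^ 2 - u) := by ring
    rw [h]
    exact dvd_add (hzx.mul_right _) (h1.trans hx)
  · have h : z ^ 2 - u = (z - y) * (z + y) + (y ^ 2 - u) := by ring
    rw [h]
    exact dvd_add (hzy.mul_right _) (h2.trans hy)

/-- Paper's Lemma 3.5. -/
theorem lemma_3_5 (a n r m : ℤ) (k : ℕ) (ha : a ≠ 0) (hn : 2 ≤ n)
    (hr : r = Int.gcd a n) (hk : k = padicValInt 2 (n / r))
    (hnm : n = 2 ^ k * r * m) (hmodd : Odd m) :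
    (k ≤ 2 → {u : ℤ | IsQR n u} ∩ {u : ℤ | IsQR (4 * a) u} = {u : ℤ | IsQR (4 * a * m) u}) ∧
    (3 ≤ k → {u : ℤ | IsQR n u} ∩ {u : ℤ | IsQR (4 * a) u} = {u : ℤ | IsQR (2 ^ k * a * m) u}) := by
  have hn0 : (0:ℤ) < n := by linarith
  have hgpos : 0 < Int.gcd a n := Int.gcd_pos_of_ne_zero_left n ha
  have hrpos : 0 < r := by rw [hr]; exact_mod_cast hgpos
  have hrdvd : r ∣ a := by rw [hr]; exact Int.gcd_dvd_left a n
  obtain ⟨a', haa'⟩ : ∃ x, a = r * x := ⟨a / r, (Int.mul_ediv_cancel' hrdvd).symm⟩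
  have hadiv : a / r = a' := by rw [haa', Int.mul_ediv_cancel_left _ hrpos.ne']
  have hndiv : n / r = 2 ^ k * m := by
    rw [hnm, show (2:ℤ) ^ k * r * m = r * (2 ^ k * m) by ring,
      Int.mul_ediv_cancel_left _ hrpos.ne']
  have hgcd1 : Int.gcd a' (2 ^ k * m) = 1 := by
    rw [← hadiv, ← hndiv, hr]
    exact Int.gcd_div_gcd_div_gcd hgpos
  -- positivity of m
  have h2k : (0:ℤ) < 2 ^ k := by positivity
  have hmpos : 0 < m := by
    have h := hn0
    rw [hnm] at h
    nlinarith [mul_pos h2k hrpos]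
  set R := r.natAbs with hRdef
  set M := m.natAbs with hMdef
  set A' := a'.natAbs with hA'def
  have hrR : ((R:ℤ)) = r := Int.natAbs_of_nonneg hrpos.le
  have hmM : ((M:ℤ)) = m := Int.natAbs_of_nonneg hmpos.le
  have hRpos : 0 < R := Int.natAbs_pos.mpr hrpos.ne'
  have hMpos : 0 < M := Int.natAbs_pos.mpr hmpos.ne'
  have hModd : Odd M := Int.natAbs_odd.mpr hmodd
  have hA'2kM : Nat.Coprime A' (2 ^ k * M) := by
    have h : Nat.gcd a'.natAbs ((2 ^ k * m)).natAbs = 1 := hgcd1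
    simpa [Int.natAbs_mul, Int.natAbs_pow] using h
  have hA'M : Nat.Coprime A' M :=
    Nat.Coprime.coprime_dvd_right (dvd_mul_left M (2 ^ k)) hA'2kM
  set s := Nat.gcd R (M ^ R) with hsdef
  set d := Nat.gcd R (2 ^ R) with hddef
  have hsR : s ∣ R := Nat.gcd_dvd_left _ _
  have hdR : d ∣ R := Nat.gcd_dvd_left _ _
  have hsMR : s ∣ M ^ R := Nat.gcd_dvd_right _ _
  have hd2R : d ∣ 2 ^ R := Nat.gcd_dvd_right _ _
  have h2s : Nat.Coprime 2 s :=
    Nat.Coprime.coprime_dvd_right hsMR ((Nat.coprime_two_left.mpr hModd).pow_right R)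
  have hsodd : Odd s := Nat.coprime_two_left.mp h2s
  have hMRs : Nat.Coprime M (R / s) := nat_coprime_div_gcd_pow R M hRpos hMpos
  have h2Rd : Nat.Coprime 2 (R / d) := nat_coprime_div_gcd_pow R 2 hRpos (by norm_num)
  constructor
  · -- case k ≤ 2
    intro hk2
    set q := R / s with hqdef
    have hRsq : R = s * q := (Nat.mul_div_cancel' hsR).symm
    have hMq : Nat.Coprime M q := hMRs
    have hsq : Nat.Coprime s q := Nat.Coprime.coprime_dvd_left hsMR (hMq.pow_left R)
    have hsA' : Nat.Coprime s A' := Nat.Coprime.coprime_dvd_left hsMR ((hA'M.symm).pow_left R)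
    have hc1n : ((s:ℤ) * m) ∣ n := ⟨2 ^ k * (q:ℤ), by rw [hnm, ← hrR, hRsq]; push_cast; ring⟩
    have hc24a : (4 * (q:ℤ) * a') ∣ 4 * a := ⟨(s:ℤ), by rw [haa', ← hrR, hRsq]; push_cast; ring⟩
    have hcop : IsCoprime ((s:ℤ) * m) (4 * (q:ℤ) * a') := by
      rw [Int.isCoprime_iff_gcd_eq_one]
      have heq : Int.gcd ((s:ℤ) * m) (4 * (q:ℤ) * a') = Nat.gcd (s * M) (4 * q * A') := by
        simp [Int.gcd, Int.natAbs_mul, hMdef, hA'def]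
      rw [heq]
      have hodd : Odd (s * M) := hsodd.mul hModd
      have h4 : Nat.Coprime (s * M) 4 := by
        rw [show (4:ℕ) = 2 ^ 2 by norm_num]
        exact ((Nat.coprime_two_right.mpr hodd)).pow_right 2
      have hq' : Nat.Coprime (s * M) q := Nat.Coprime.mul hsq hMq
      have hA'' : Nat.Coprime (s * M) A' := Nat.Coprime.mul hsA' hA'M.symm
      exact (h4.mul_right hq').mul_right hA''
    have hprod : ((s:ℤ) * m) * (4 * (q:ℤ) * a') = 4 * a * m := by
      rw [haa', ← hrR, hRsq]; push_cast; ring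
    ext u
    simp only [Set.mem_inter_iff, Set.mem_setOf_eq]
    constructor
    · rintro ⟨h1, h2⟩
      exact hprod ▸ isQR_mul hc1n hc24a hcop h1 h2
    · intro h
      have h4eq : (4:ℤ) = 2 ^ k * 2 ^ (2 - k) := by
        rw [← pow_add, show k + (2 - k) = 2 by omega]; norm_num
      have hn4am : n ∣ 4 * a * m := ⟨2 ^ (2 - k) * a', by rw [hnm, haa', h4eq]; ring⟩
      have h44 : 4 * a ∣ 4 * a * m := dvd_mul_right _ _
      exact ⟨isQR_of_dvd hn4am h, isQR_of_dvd h44 h⟩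
  · -- case 3 ≤ k
    intro hk3
    have hA'2 : Nat.Coprime A' 2 := by
      refine Nat.Coprime.coprime_dvd_right ?_ hA'2kM
      exact dvd_mul_of_dvd_left (dvd_pow_self 2 (by omega : k ≠ 0)) M
    have hA'odd : Odd A' := Nat.coprime_two_right.mp hA'2
    have hds : Nat.Coprime d s := Nat.Coprime.coprime_dvd_left hd2R (h2s.pow_left R)
    have hdsR : d * s ∣ R := hds.mul_dvd_of_dvd_of_dvd hdR hsR
    have hdpos : 0 < d := Nat.gcd_pos_of_pos_left _ hRpos
    have hspos : 0 < s := Nat.gcd_pos_of_pos_left _ hRpos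
    set q := R / (d * s) with hqdef
    have hq : R = d * s * q := (Nat.mul_div_cancel' hdsR).symm
    have hRd : R / d = s * q := by
      rw [hq, mul_assoc, Nat.mul_div_cancel_left _ hdpos]
    have hRs : R / s = d * q := by
      rw [hq, show d * s * q = s * (d * q) by ring, Nat.mul_div_cancel_left _ hspos]
    have h2q : Nat.Coprime 2 q := by
      rw [hRd] at h2Rd
      exact Nat.Coprime.coprime_dvd_right (dvd_mul_left q s) h2Rd
    have hMq : Nat.Coprime M q := by
      rw [hRs] at hMRs
      exact Nat.Coprime.coprime_dvd_right (dvd_mul_left q d) hMRs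
    have hc1n : (2 ^ k * (d:ℤ) * (s:ℤ) * m) ∣ n :=
      ⟨(q:ℤ), by rw [hnm, ← hrR, hq]; push_cast; ring⟩
    have hc24a : ((q:ℤ) * a') ∣ 4 * a :=
      ⟨4 * (d:ℤ) * (s:ℤ), by rw [haa', ← hrR, hq]; push_cast; ring⟩
    have h2qA' : Nat.Coprime 2 (q * A') := h2q.mul_right (Nat.coprime_two_left.mpr hA'odd)
    have hMqA' : Nat.Coprime M (q * A') := hMq.mul_right hA'M.symm
    have hcop : IsCoprime (2 ^ k * (d:ℤ) * (s:ℤ) * m) ((q:ℤ) * a') := by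
      rw [Int.isCoprime_iff_gcd_eq_one]
      have heq : Int.gcd (2 ^ k * (d:ℤ) * (s:ℤ) * m) ((q:ℤ) * a')
          = Nat.gcd (2 ^ k * d * s * M) (q * A') := by
        simp [Int.gcd, Int.natAbs_mul, Int.natAbs_pow, hMdef, hA'def]
      rw [heq]
      have hp2 : Nat.Coprime (2 ^ k) (q * A') := h2qA'.pow_left k
      have hpd : Nat.Coprime d (q * A') :=
        Nat.Coprime.coprime_dvd_left hd2R (h2qA'.pow_left R)
      have hps : Nat.Coprime s (q * A') :=
        Nat.Coprime.coprime_dvd_left hsMR (hMqA'.pow_left R)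
      exact ((hp2.mul hpd).mul hps).mul hMqA'
    have hprod : (2 ^ k * (d:ℤ) * (s:ℤ) * m) * ((q:ℤ) * a') = 2 ^ k * a * m := by
      rw [haa', ← hrR, hq]; push_cast; ring
    ext u
    simp only [Set.mem_inter_iff, Set.mem_setOf_eq]
    constructor
    · rintro ⟨h1, h2⟩
      exact hprod ▸ isQR_mul hc1n hc24a hcop h1 h2
    · intro h
      have h4eq : (2:ℤ) ^ k = 4 * 2 ^ (k - 2) := by
        rw [show (4:ℤ) = 2 ^ 2 by norm_num, ← pow_add, show 2 + (k - 2) = k by omega]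
      have hn2am : n ∣ 2 ^ k * a * m := ⟨a', by rw [hnm, haa']; ring⟩
      have h42am : 4 * a ∣ 2 ^ k * a * m := ⟨2 ^ (k - 2) * m, by rw [h4eq]; ring⟩
      exact ⟨isQR_of_dvd hn2am h, isQR_of_dvd h42am h⟩
end

section
/- Let a, b, c, n be integers with a ≠ 0 and n ≥ 2, let q(x) = a·x² + b·x + c and d = b² − 4·a·c, let r = gcd(a, n), let k be the multiplicity of 2 in n/r, write n = 2^k·r·m with m odd, let δ = gcd(m, r), define Q = {x ∈ ℤ : q(x) ≡ 0 (mod m)} if k = 0, 1, or 2 and Q = {x ∈ ℤ : q(x) ≡ 0 (mod 2^{k−2}·m)} if k ≥ 3, and T = {x ∈ ℤ : q(x) ≡ 0 (mod n)}. Suppose r divides both b and c, and suppose in addition that one of the following holds: (k = 0) d/r² is a quadratic residue of m and either δ = 1 or δ is a product of distinct odd primes p₁, …, p_t, each p_i has even multiplicity m_i in m, and p₁^{m₁}⋯p_t^{m_t} divides d/r²; (k = 1) b/r is odd, at least one of a/r and c/r is even, and d/r² and δ satisfy the conditions just stated for the case k = 0; (k ≥ 2) r/δ and k are odd, the multiplicity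 of 2 in d/r² equals k − 1, d/(r²·2^{k−1}) ≡ 1 (mod 8), and d/r² and δ satisfy the conditions stated for the case k = 0. Then Q is nonempty and Q = T. -/
/-- The condition on `δ`, `m`, and `D = d/r²` appearing in (5.2) of the paper:
either `δ = 1`, or `δ` is a product of distinct odd primes, each prime factor of
`δ` has even multiplicity in `m`, and the product of these prime powers divides `D`. -/
def DeltaCond (δ m D : ℤ) : Prop :=
  δ = 1 ∨
    (1 < δ ∧ Odd δ ∧ Squarefree δ ∧
      (∀ p ∈ δ.natAbs.primeFactors, Even (padicValInt p m)) ∧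
      (∏ p ∈ δ.natAbs.primeFactors, (p : ℤ) ^ padicValInt p m) ∣ D)

lemma solveLin (M α β : ℤ) (h : IsCoprime α M) : ∃ x, M ∣ α * x - β := by
  obtain ⟨u, v, huv⟩ := h
  exact ⟨u * β, ⟨-(v*β), by linear_combination β * huv⟩⟩

lemma coprime_two_int (a : ℤ) (h : Odd a) : IsCoprime (2:ℤ) a := by
  rw [Int.prime_two.coprime_iff_not_dvd]
  rintro ⟨w, hw⟩
  obtain ⟨j, hj⟩ := h
  omega

lemma lemC (p : ℕ) (hp : p.Prime) (t : ℕ) (y : ℤ) (h : (p:ℤ)^(2*t+1) ∣ y^2) :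
    (p:ℤ)^(2*t+2) ∣ y^2 := by
  rcases eq_or_ne y 0 with rfl | hy
  · simp
  have hy2 : y.natAbs ^ 2 ≠ 0 := pow_ne_zero _ (Int.natAbs_ne_zero.mpr hy)
  have h' : p ^ (2*t+1) ∣ y.natAbs ^ 2 := by
    have := Int.natAbs_dvd_natAbs.mpr h
    simpa [Int.natAbs_pow] using this
  have hle : 2*t+1 ≤ (y.natAbs ^ 2).factorization p :=
    (hp.pow_dvd_iff_le_factorization hy2).mp h'
  rw [Nat.factorization_pow] at hle
  simp only [Finsupp.smul_apply, smul_eq_mul] at hle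
  have hle2 : t + 1 ≤ (y.natAbs).factorization p := by omega
  have hdvd : p ^ (t+1) ∣ y.natAbs :=
    (hp.pow_dvd_iff_le_factorization (Int.natAbs_ne_zero.mpr hy)).mpr hle2
  have hdvd' : (p:ℤ) ^ (t+1) ∣ y := by
    rwa [← Int.natAbs_dvd_natAbs, Int.natAbs_pow, Int.natAbs_natCast]
  have : ((p:ℤ) ^ (t+1))^2 ∣ y^2 := pow_dvd_pow_of_dvd hdvd' 2
  calc (p:ℤ)^(2*t+2) = ((p:ℤ)^(t+1))^2 := by ring
  _ ∣ y^2 := this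

lemma lemA (r a' b' c' m δ : ℤ) (hm0 : 0 < m)
    (hδ : δ = Int.gcd m r)
    (hDC : DeltaCond δ m (b'^2 - 4*a'*c'))
    (ham : IsCoprime a' m) (x : ℤ)
    (h : m ∣ r * (a'*x^2 + b'*x + c')) :
    m ∣ a'*x^2 + b'*x + c' := by
  set q : ℤ := a'*x^2 + b'*x + c' with hq
  set y : ℤ := 2*a'*x + b' with hy
  set D : ℤ := b'^2 - 4*a'*c' with hD
  have hkey : 4*a'*q = y^2 - D := by rw [hq, hy, hD]; ring
  have hm : m ≠ 0 := hm0.ne'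
  rcases hDC with h1 | ⟨hδ1, hδodd, hδsf, hev, hPD⟩
  · have : Int.gcd m r = 1 := by exact_mod_cast hδ ▸ h1
    exact (Int.isCoprime_iff_gcd_eq_one.mpr this).dvd_of_dvd_mul_left h
  · set S := δ.natAbs.primeFactors with hS
    -- each prime power divides q
    have hmain : ∀ p ∈ S, (p:ℤ)^(padicValInt p m) ∣ q := by
      intro p hpS
      obtain ⟨hp, hpδ, hδ0⟩ := Nat.mem_primeFactors.mp hpS
      haveI : Fact p.Prime := ⟨hp⟩
      have hpInt : Prime (p:ℤ) := Nat.prime_iff_prime_int.mp hp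
      have hpδ' : (p:ℤ) ∣ δ := by rwa [Int.natCast_dvd]
      have hpm : (p:ℤ) ∣ m := hpδ'.trans (hδ ▸ Int.gcd_dvd_left _ _)
      have hpr : (p:ℤ) ∣ r := hpδ'.trans (hδ ▸ Int.gcd_dvd_right _ _)
      -- p is odd
      have hpne2 : p ≠ 2 := by
        rintro rfl
        have h2 : Odd δ.natAbs := Int.natAbs_odd.mpr hδodd
        rw [Nat.odd_iff] at h2
        omega
      -- p does not divide 4 a'
      have hp4a : IsCoprime ((p:ℤ)) (4*a') := by
        rw [hpInt.coprime_iff_not_dvd]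
        rintro hd
        rcases hpInt.dvd_mul.mp hd with h4 | ha'
        · have h4' : p ∣ 4 := by rwa [Int.natCast_dvd] at h4
          have : p ∣ 2 := hp.dvd_of_dvd_pow (n := 2) (by norm_num [h4'])
          exact hpne2 ((Nat.prime_dvd_prime_iff_eq hp Nat.prime_two).mp this)
        · exact hpInt.not_unit (ham.isUnit_of_dvd' ha' hpm)
      -- the multiplicity is even and ≥ 2
      have he1 : 1 ≤ padicValInt p m := by
        rcases (padicValInt_dvd_iff (p := p) 1 m).mp (by simpa using hpm) with h0 | h0
        · exact absurd h0 hm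
        · exact h0
      obtain ⟨t', ht'⟩ := hev p hpS
      have hept : padicValInt p m = 2*(t'-1)+2 := by omega
      set t : ℕ := t' - 1 with htdef
      -- r = p * r₂ with p ∤ r₂
      have hp2r : ¬ (p:ℤ)^2 ∣ r := by
        intro h2r
        have hp2m : (p:ℤ)^2 ∣ m := by
          rw [padicValInt_dvd_iff]
          right; omega
        have : (p:ℤ)^2 ∣ δ := hδ ▸ Int.dvd_coe_gcd hp2m h2r
        have := hδsf (p:ℤ) (by rwa [← sq])
        exact hpInt.not_unit this
      obtain ⟨r₂, hr₂⟩ : (p:ℤ) ∣ r := hpr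
      have hpr₂ : ¬ (p:ℤ) ∣ r₂ := by
        intro hd
        exact hp2r (by rw [hr₂, sq]; exact mul_dvd_mul_left _ hd)
      -- p^(e p) ∣ m ∣ r * q, extract p^(2t+1) ∣ q
      have hpem : (p:ℤ)^(2*t+2) ∣ m := hept ▸ padicValInt_dvd m
      have h1 : (p:ℤ) * (p:ℤ)^(2*t+1) ∣ (p:ℤ) * (r₂ * q) := by
        rw [← pow_succ']
        calc (p:ℤ)^(2*t+1+1) = (p:ℤ)^(2*t+2) := by norm_num
        _ ∣ m := hpem
        _ ∣ r * q := h
        _ = (p:ℤ) * (r₂ * q) := by rw [hr₂]; ring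
      have h2 : (p:ℤ)^(2*t+1) ∣ r₂ * q :=
        (mul_dvd_mul_iff_left hpInt.ne_zero).mp h1
      have hcop₂ : IsCoprime ((p:ℤ)^(2*t+1)) r₂ :=
        ((hpInt.coprime_iff_not_dvd).mpr hpr₂).pow_left
      have h3 : (p:ℤ)^(2*t+1) ∣ q := hcop₂.dvd_of_dvd_mul_left h2
      -- p^(e p) ∣ D
      have hpeD : (p:ℤ)^(2*t+2) ∣ D := by
        refine dvd_trans ?_ hPD
        simpa only [hept] using
          Finset.dvd_prod_of_mem (fun i : ℕ => (i:ℤ)^(padicValInt i m)) hpS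
      have h4 : (p:ℤ)^(2*t+1) ∣ y^2 := by
        have hyD : y^2 = 4*a'*q + D := by rw [hkey]; ring
        rw [hyD]
        exact dvd_add (h3.mul_left _) ((pow_dvd_pow _ (by omega)).trans hpeD)
      have h5 : (p:ℤ)^(2*t+2) ∣ y^2 := lemC p hp t y h4
      have h6 : (p:ℤ)^(2*t+2) ∣ (4*a')*q := by
        have : (p:ℤ)^(2*t+2) ∣ y^2 - D := dvd_sub h5 hpeD
        rw [← hkey] at this
        rwa [mul_assoc] at this ⊢
      rw [hept]
      exact (hp4a.pow_left).dvd_of_dvd_mul_left h6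
    -- assemble
    have hprS : ∀ p ∈ S, Nat.Prime p := fun p hp => (Nat.mem_primeFactors.mp hp).1
    have hpair : (↑S : Set ℕ).Pairwise
        (Function.onFun IsCoprime (fun i : ℕ => (i:ℤ)^(padicValInt i m))) := by
      intro p hp p' hp' hne
      have h1 : Nat.Coprime p p' := (Nat.coprime_primes (hprS p hp) (hprS p' hp')).mpr hne
      have h2 : IsCoprime (p:ℤ) (p':ℤ) := by
        rw [Int.isCoprime_iff_gcd_eq_one, Int.gcd_natCast_natCast]; exact h1
      exact h2.pow
    have hPq : (∏ p ∈ S, (p:ℤ)^(padicValInt p m)) ∣ q :=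
      Finset.prod_dvd_of_coprime hpair hmain
    have hPm : (∏ p ∈ S, (p:ℤ)^(padicValInt p m)) ∣ m :=
      Finset.prod_dvd_of_coprime hpair (fun p hp => by
        haveI : Fact (Nat.Prime p) := ⟨hprS p hp⟩
        exact padicValInt_dvd m)
    obtain ⟨m₁, hm₁⟩ := hPm
    have hnm1 : ∀ p ∈ S, ¬ (p:ℤ) ∣ m₁ := by
      intro p hpS hdvd
      haveI : Fact (Nat.Prime p) := ⟨hprS p hpS⟩
      have hpeP : (p:ℤ)^(padicValInt p m) ∣ ∏ p ∈ S, (p:ℤ)^(padicValInt p m) :=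
        Finset.dvd_prod_of_mem (fun i : ℕ => (i:ℤ)^(padicValInt i m)) hpS
      obtain ⟨P₂, hP₂⟩ := hpeP
      obtain ⟨w, hw⟩ := hdvd
      have hm' : m = (p:ℤ)^(padicValInt p m) * (p:ℤ) * (P₂ * w) := by
        calc m = (∏ p ∈ S, (p:ℤ)^(padicValInt p m)) * m₁ := hm₁
        _ = (p:ℤ)^(padicValInt p m) * (p:ℤ) * (P₂ * w) := by rw [hP₂, hw]; ring
      have hd2 : (p:ℤ)^(padicValInt p m + 1) ∣ m :=
        ⟨P₂ * w, by rw [pow_succ]; exact hm'⟩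
      rcases (padicValInt_dvd_iff _ m).mp hd2 with h0 | h0
      · exact hm h0
      · omega
    have hmemS : ∀ p : ℕ, p.Prime → (p:ℤ) ∣ δ → p ∈ S := by
      intro p hp hd
      refine Nat.mem_primeFactors.mpr ⟨hp, Int.natCast_dvd.mp hd, ?_⟩
      simp only [Int.natAbs_ne_zero]
      omega
    have hcopaux : ∀ z w : ℤ,
        (∀ p : ℕ, p.Prime → (p:ℤ) ∣ z → (p:ℤ) ∣ w → False) → IsCoprime z w := by
      intro z w hzw
      rw [Int.isCoprime_iff_gcd_eq_one]
      by_contra hne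
      obtain ⟨p, hp, h1, h2⟩ := Nat.Prime.not_coprime_iff_dvd.mp
        (fun hcop => hne (by rw [Int.gcd_def]; exact hcop))
      exact hzw p hp (Int.natCast_dvd.mpr h1) (Int.natCast_dvd.mpr h2)
    have hcop1 : IsCoprime m₁ r := by
      refine hcopaux _ _ (fun p hp h1 h2 => ?_)
      have hpm2 : (p:ℤ) ∣ m := by rw [hm₁]; exact h1.mul_left _
      have hpδ2 : (p:ℤ) ∣ δ := hδ ▸ Int.dvd_coe_gcd hpm2 h2
      exact hnm1 p (hmemS p hp hpδ2) h1
    have hcop2 : IsCoprime (∏ p ∈ S, (p:ℤ)^(padicValInt p m)) m₁ := by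
      refine hcopaux _ _ (fun p hp h1 h2 => ?_)
      have hPp : Prime (p:ℤ) := Nat.prime_iff_prime_int.mp hp
      obtain ⟨i, hiS, hidvd⟩ := hPp.exists_mem_finset_dvd h1
      have hpi : (p:ℤ) ∣ (i:ℤ) := hPp.dvd_of_dvd_pow hidvd
      have : p = i := (Nat.prime_dvd_prime_iff_eq hp (hprS i hiS)).mp
        (Int.natCast_dvd_natCast.mp hpi)
      subst this
      exact hnm1 p hiS h2
    have hm₁m : m₁ ∣ m := ⟨_, by rw [hm₁]; ring⟩
    have h9 : m₁ ∣ q := hcop1.dvd_of_dvd_mul_left (hm₁m.trans h)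
    rw [hm₁]
    exact hcop2.mul_dvd hPq h9

lemma lemB (k : ℕ) (hk3 : 3 ≤ k) (hkodd : Odd k) (a' b' c' D' : ℤ) (ha' : Odd a')
    (hDval : b'^2 - 4*a'*c' = 2^(k-1) * D') (hD' : (8:ℤ) ∣ D' - 1)
    (x : ℤ) (h : (2:ℤ)^(k-2) ∣ a'*x^2 + b'*x + c') :
    (2:ℤ)^k ∣ a'*x^2 + b'*x + c' := by
  obtain ⟨s, hs⟩ := hkodd
  have hs1 : 1 ≤ s := by omega
  set q : ℤ := a'*x^2 + b'*x + c' with hq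
  set y : ℤ := 2*a'*x + b' with hy
  have hkey : 4*a'*q = y^2 - 2^(k-1) * D' := by rw [hq, hy, ← hDval]; ring
  have h1 : (2:ℤ)^k ∣ y^2 - 2^(k-1) * D' := by
    rw [← hkey]
    obtain ⟨w, hw⟩ := h
    refine ⟨a' * w, ?_⟩
    have : (2:ℤ)^k = 2^(k-2) * 4 := by
      rw [show (4:ℤ) = 2^2 by norm_num, ← pow_add]
      congr 1
      omega
    rw [this, hw]; ring
  have hDodd : Odd D' := by
    obtain ⟨t, ht⟩ := hD'
    exact ⟨4*t, by linarith⟩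
  have h2 : ((2:ℤ)^s)^2 ∣ y^2 := by
    have h2a : (2:ℤ)^(k-1) ∣ y^2 := by
      have : y^2 = (y^2 - 2^(k-1)*D') + 2^(k-1)*D' := by ring
      rw [this]
      exact dvd_add ((pow_dvd_pow (2:ℤ) (by omega)).trans h1) ⟨D', rfl⟩
    have hex : k - 1 = s * 2 := by omega
    rwa [hex, pow_mul] at h2a
  obtain ⟨u, hu⟩ := (Int.pow_dvd_pow_iff (two_ne_zero)).mp h2
  have hy2 : y^2 = 2^(k-1) * u^2 := by
    rw [hu]
    rw [mul_pow, ← pow_mul]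
    congr 2
    omega
  have h3 : (2:ℤ) ∣ u^2 - D' := by
    have h3a : (2:ℤ)^(k-1) * 2 ∣ 2^(k-1) * (u^2 - D') := by
      have e1 : (2:ℤ)^(k-1) * (u^2 - D') = y^2 - 2^(k-1) * D' := by rw [hy2]; ring
      have e2 : (2:ℤ)^(k-1) * 2 = 2^k := by rw [← pow_succ]; congr 1; omega
      rw [e1, e2]; exact h1
    exact (mul_dvd_mul_iff_left (pow_ne_zero (k-1) (two_ne_zero' ℤ))).mp h3a
  have huodd : Odd u := by
    rcases Int.even_or_odd u with he | ho
    · exfalso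
      obtain ⟨v, hv⟩ := he
      obtain ⟨w, hw⟩ := h3
      obtain ⟨t, ht⟩ := hDodd
      have : u^2 = 4*v^2 := by rw [hv]; ring
      omega
    · exact ho
  have h8 : (8:ℤ) ∣ u^2 - D' := by
    obtain ⟨v, hv⟩ := huodd
    obtain ⟨w, hw⟩ := Int.even_mul_succ_self v
    obtain ⟨t, ht⟩ := hD'
    refine ⟨w + (-t), ?_⟩
    have : u^2 - 1 = 4 * (v * (v+1)) := by rw [hv]; ring
    have h2w : v * (v + 1) = 2 * w := by rw [hw]; ring
    nlinarith [this, h2w, ht]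
  have h4 : (2:ℤ)^k * 4 ∣ 4 * (a' * q) := by
    have e1 : (2:ℤ)^k * 4 = 2^(k-1) * 8 := by
      rw [show (8:ℤ) = 2*4 by norm_num, show (2:ℤ)^k = 2^(k-1)*2 by rw [← pow_succ]; congr 1; omega]
      ring
    have e2 : 4 * (a' * q) = 2^(k-1) * (u^2 - D') := by
      rw [show 4 * (a' * q) = 4*a'*q by ring, hkey, hy2]; ring
    rw [e1, e2]
    exact mul_dvd_mul_left _ h8
  have h5 : (2:ℤ)^k ∣ a' * q := by
    refine (mul_dvd_mul_iff_left (a := (4:ℤ)) (by norm_num : (4:ℤ) ≠ 0)).mp ?_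
    rw [show (4:ℤ) * 2^k = 2^k * 4 by ring]
    exact h4
  have hcop : IsCoprime ((2:ℤ)^k) a' := by
    refine IsCoprime.pow_left ?_
    rw [Int.prime_two.coprime_iff_not_dvd]
    rw [Int.two_dvd_ne_zero]
    obtain ⟨v, hv⟩ := ha'
    omega
  exact hcop.dvd_of_dvd_mul_left h5


/-- Paper's Lemma 5.2. -/
theorem lemma_5_2 (a b c n r m δ : ℤ) (k : ℕ) (ha : a ≠ 0) (hn : 2 ≤ n)
    (hr : r = Int.gcd a n) (hk : k = padicValInt 2 (n / r))
    (hnm : n = 2 ^ k * r * m) (hmodd : Odd m) (hδ : δ = Int.gcd m r)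
    (hb : r ∣ b) (hc : r ∣ c)
    (hcase :
      (k = 0 ∧ IsQR m ((b ^ 2 - 4 * a * c) / r ^ 2) ∧
        DeltaCond δ m ((b ^ 2 - 4 * a * c) / r ^ 2)) ∨
      (k = 1 ∧ Odd (b / r) ∧ (Even (a / r) ∨ Even (c / r)) ∧
        IsQR m ((b ^ 2 - 4 * a * c) / r ^ 2) ∧
        DeltaCond δ m ((b ^ 2 - 4 * a * c) / r ^ 2)) ∨
      (2 ≤ k ∧ Odd (r / δ) ∧ Odd k ∧
        padicValInt 2 ((b ^ 2 - 4 * a * c) / r ^ 2) = k - 1 ∧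
        (8 : ℤ) ∣ (b ^ 2 - 4 * a * c) / (r ^ 2 * 2 ^ (k - 1)) - 1 ∧
        IsQR m ((b ^ 2 - 4 * a * c) / r ^ 2) ∧
        DeltaCond δ m ((b ^ 2 - 4 * a * c) / r ^ 2))) :
    ({x : ℤ | (if k ≤ 2 then m else 2 ^ (k - 2) * m) ∣
      a * x ^ 2 + b * x + c}).Nonempty ∧
    {x : ℤ | (if k ≤ 2 then m else 2 ^ (k - 2) * m) ∣ a * x ^ 2 + b * x + c} =
      {x : ℤ | n ∣ a * x ^ 2 + b * x + c} := by
  have hr0 : 0 < r := by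
    rw [hr]
    exact_mod_cast Nat.pos_of_ne_zero (fun h0 => ha (by
      simpa using Int.gcd_eq_zero_iff.mp h0 |>.1))
  have hra : r ∣ a := hr ▸ Int.gcd_dvd_left _ _
  have hrn : r ∣ n := hr ▸ Int.gcd_dvd_right _ _
  obtain ⟨a', haa⟩ := hra
  obtain ⟨b', hbb⟩ := hb
  obtain ⟨c', hcc⟩ := hc
  have hn0 : 0 < n := by omega
  have hm0 : 0 < m := by
    rcases lt_trichotomy m 0 with h0 | h0 | h0
    · have hneg := mul_neg_of_pos_of_neg
        (mul_pos (pow_pos (by norm_num : (0:ℤ) < 2) k) hr0) h0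
      rw [← hnm] at hneg
      omega
    · rw [h0, mul_zero] at hnm; omega
    · exact h0
  have hD : (b ^ 2 - 4 * a * c) / r ^ 2 = b'^2 - 4*a'*c' := by
    have he : b ^ 2 - 4 * a * c = r^2 * (b'^2 - 4*a'*c') := by
      rw [haa, hbb, hcc]; ring
    rw [he, Int.mul_ediv_cancel_left _ (pow_ne_zero 2 hr0.ne')]
  have hqx : ∀ x : ℤ, a * x ^ 2 + b * x + c = r * (a'*x^2 + b'*x + c') := by
    intro x; rw [haa, hbb, hcc]; ring
  -- a' is coprime to m
  have hcop_am : IsCoprime a' m := by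
    rw [Int.isCoprime_iff_gcd_eq_one]
    by_contra hne
    obtain ⟨p, hp, h1, h2⟩ := Nat.Prime.not_coprime_iff_dvd.mp
      (fun hcop => hne (by rw [Int.gcd_def]; exact hcop))
    have h1' : (p:ℤ) ∣ a' := Int.natCast_dvd.mpr h1
    have h2' : (p:ℤ) ∣ m := Int.natCast_dvd.mpr h2
    have hd1 : r * p ∣ a := by rw [haa]; exact mul_dvd_mul_left r h1'
    have hd2 : r * p ∣ n := by
      rw [hnm, show (2:ℤ)^k * r * m = r * (2^k * m) by ring]
      exact mul_dvd_mul_left r (h2'.mul_left _)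
    have hd3 : r * (p:ℤ) ∣ r := by
      conv_rhs => rw [hr]
      exact Int.dvd_coe_gcd hd1 hd2
    have : (p:ℤ) ∣ 1 := (mul_dvd_mul_iff_left hr0.ne').mp
      (by rw [mul_one]; exact hd3)
    exact hp.one_lt.ne' (by exact_mod_cast Int.eq_one_of_dvd_one (by positivity) this)
  -- for k ≥ 1, a' is odd
  have ha'odd : 1 ≤ k → Odd a' := by
    intro hk1
    rcases Int.even_or_odd a' with he | ho
    · exfalso
      obtain ⟨A, hA⟩ := he
      have hd1 : r * 2 ∣ a := ⟨A, by rw [haa, hA]; ring⟩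
      have hd2 : r * 2 ∣ n := by
        rw [hnm]
        refine ⟨2^(k-1) * m, ?_⟩
        rw [show (2:ℤ)^k = 2 * 2^(k-1) by rw [← pow_succ']; congr 1; omega]
        ring
      have hd3 : r * (2:ℤ) ∣ r := by
        conv_rhs => rw [hr]
        exact Int.dvd_coe_gcd hd1 hd2
      have : (2:ℤ) ∣ 1 := (mul_dvd_mul_iff_left hr0.ne').mp
        (by rw [mul_one]; exact hd3)
      norm_num at this
    · exact ho
  -- nonemptiness mod m
  have hnonm : IsQR m (b'^2 - 4*a'*c') → ∃ x : ℤ, m ∣ (a'*x^2 + b'*x + c') := by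
    intro ⟨z, hz⟩
    have hcop2m : IsCoprime (2:ℤ) m := coprime_two_int m hmodd
    have hcop2am : IsCoprime (2*a') m := hcop2m.mul_left hcop_am
    obtain ⟨x, hx⟩ := solveLin m (2*a') (z - b') hcop2am
    refine ⟨x, ?_⟩
    have hy : m ∣ (2*a'*x + b') - z := by
      have : (2*a'*x + b') - z = 2*a'*x - (z - b') := by ring
      rwa [this]
    have h4 : m ∣ (4*a') * (a'*x^2 + b'*x + c') := by
      have hid : (4*a') * (a'*x^2 + b'*x + c') =
          ((2*a'*x + b') - z) * ((2*a'*x + b') + z) + (z^2 - (b'^2 - 4*a'*c')) := by ring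
      rw [hid]
      exact dvd_add (hy.mul_right _) hz
    have hcop4am : IsCoprime (4*a') m := by
      have : IsCoprime (2*(2*a')) m := hcop2m.mul_left hcop2am
      rwa [show (2:ℤ)*(2*a') = 4*a' by ring] at this
    exact hcop4am.symm.dvd_of_dvd_mul_left h4
  rcases hcase with ⟨hk0, hQR, hDC⟩ | ⟨hk1, hbodd, hevac, hQR, hDC⟩ |
    ⟨hk2, hrδ, hkodd, hval, h8, hQR, hDC⟩
  · subst hk0
    rw [if_pos (by norm_num : (0:ℕ) ≤ 2)]
    rw [hD] at hQR hDC
    simp only [pow_zero, one_mul] at hnm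
    constructor
    · obtain ⟨x, hx⟩ := hnonm hQR
      exact ⟨x, by simp only [Set.mem_setOf_eq, hqx x]; exact hx.mul_left r⟩
    · ext x
      simp only [Set.mem_setOf_eq, hqx x]
      constructor
      · intro hmem
        have h1 := lemA r a' b' c' m δ hm0 hδ hDC hcop_am x hmem
        rw [hnm]
        exact mul_dvd_mul_left r h1
      · intro hmem
        exact dvd_trans ⟨r, by rw [hnm]; ring⟩ hmem
  · subst hk1
    rw [if_pos (by norm_num : (1:ℕ) ≤ 2)]
    rw [hD] at hQR hDC
    have ha' : Odd a' := ha'odd le_rfl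
    have hb' : Odd b' := by
      have e : b / r = b' := by rw [hbb, Int.mul_ediv_cancel_left _ hr0.ne']
      rwa [e] at hbodd
    have hc' : Even c' := by
      have e1 : a / r = a' := by rw [haa, Int.mul_ediv_cancel_left _ hr0.ne']
      have e2 : c / r = c' := by rw [hcc, Int.mul_ediv_cancel_left _ hr0.ne']
      rcases hevac with h | h
      · rw [e1] at h
        exact absurd h (Int.not_even_iff_odd.mpr ha')
      · rwa [e2] at h
    have hpar : ∀ x : ℤ, (2:ℤ) ∣ a'*x^2 + b'*x + c' := by
      intro x
      obtain ⟨A, hA⟩ := ha'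
      obtain ⟨B, hB⟩ := hb'
      obtain ⟨C, hC⟩ := hc'
      obtain ⟨E, hE⟩ := Int.even_mul_succ_self x
      exact ⟨A*x^2 + B*x + C + E, by rw [hA, hB, hC]; linear_combination hE⟩
    constructor
    · obtain ⟨x, hx⟩ := hnonm hQR
      exact ⟨x, by simp only [Set.mem_setOf_eq, hqx x]; exact hx.mul_left r⟩
    · ext x
      simp only [Set.mem_setOf_eq, hqx x]
      constructor
      · intro hmem
        have h1 := lemA r a' b' c' m δ hm0 hδ hDC hcop_am x hmem
        have h2 := hpar x
        have hcop2m : IsCoprime (2:ℤ) m := coprime_two_int m hmodd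
        have h3 : 2 * m ∣ a'*x^2+b'*x+c' := hcop2m.mul_dvd h2 h1
        rw [hnm, show (2:ℤ)^1 * r * m = r * (2*m) by ring]
        exact mul_dvd_mul_left r h3
      · intro hmem
        refine dvd_trans ?_ hmem
        exact ⟨2^1 * r, by rw [hnm]; ring⟩
  · have hk3 : 3 ≤ k := by
      obtain ⟨j, hj⟩ := hkodd; omega
    rw [if_neg (by omega : ¬ k ≤ 2)]
    rw [hD] at hQR hDC hval
    have h8' : (8:ℤ) ∣ (b'^2-4*a'*c') / 2^(k-1) - 1 := by
      have e : (b ^ 2 - 4 * a * c) / (r ^ 2 * 2 ^ (k - 1))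
          = (b'^2-4*a'*c') / 2^(k-1) := by
        rw [show b^2-4*a*c = r^2 * (b'^2 - 4*a'*c') by rw [haa, hbb, hcc]; ring]
        exact Int.mul_ediv_mul_of_pos _ _ (pow_pos hr0 2)
      rwa [e] at h8
    haveI : Fact (Nat.Prime 2) := ⟨Nat.prime_two⟩
    have hdvdD : (2:ℤ)^(k-1) ∣ (b'^2 - 4*a'*c') := by
      have hpd := padicValInt_dvd (p := 2) (b'^2 - 4*a'*c')
      rw [hval] at hpd
      exact_mod_cast hpd
    set D' : ℤ := (b'^2 - 4*a'*c') / 2^(k-1) with hD'def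
    have hDval : b'^2 - 4*a'*c' = 2^(k-1) * D' := (Int.mul_ediv_cancel' hdvdD).symm
    have ha' : Odd a' := ha'odd (by omega)
    have hrodd : Odd r := by
      have hδr : δ ∣ r := hδ ▸ Int.gcd_dvd_right _ _
      have hδodd : Odd δ := by
        rcases hDC with h1 | ⟨_, h2, _⟩
        · rw [h1]; exact odd_one
        · exact h2
      have e : r = δ * (r / δ) := (Int.mul_ediv_cancel' hδr).symm
      rw [e]
      exact hδodd.mul hrδ
    have hcop2m : IsCoprime (2:ℤ) m := coprime_two_int m hmodd
    have hcop2km : IsCoprime ((2:ℤ)^k) m := hcop2m.pow_left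
    have e2 : (2:ℤ)^k = 2*2^(k-1) := by rw [← pow_succ']; congr 1; omega
    constructor
    · -- nonemptiness
      obtain ⟨z, hz⟩ := hQR
      obtain ⟨s, hsk⟩ := hkodd
      have hs1 : 1 ≤ s := by omega
      obtain ⟨u, v, huv⟩ := hcop2km
      set y : ℤ := z*(u*2^k) + 2^s*(v*m) with hydef
      have hy1 : (2:ℤ)^k ∣ y - 2^s :=
        ⟨u*z - u*2^s, by rw [hydef]; linear_combination (2:ℤ)^s * huv⟩
      have hy2 : m ∣ y - z := ⟨v*2^s - z*v, by rw [hydef]; linear_combination z * huv⟩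
      have hb'even : Even b' := by
        have h2b2 : (2:ℤ) ∣ b'^2 := by
          obtain ⟨w, hw⟩ := hdvdD
          refine ⟨2^(k-2)*w + 2*a'*c', ?_⟩
          have eb : b'^2 = 2^(k-1)*w + 4*a'*c' := by linarith [hw]
          rw [eb, show (2:ℤ)^(k-1) = 2*2^(k-2) by rw [← pow_succ']; congr 1; omega]
          ring
        obtain ⟨w, hw⟩ := Int.prime_two.dvd_of_dvd_pow h2b2
        exact ⟨w, by omega⟩
      have hyeven : Even y := by
        obtain ⟨w, hw⟩ := hy1
        have e1 : (2:ℤ)^s = 2*2^(s-1) := by rw [← pow_succ']; congr 1; omega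
        refine ⟨2^(s-1) + 2^(k-1)*w, ?_⟩
        calc y = 2^s + 2^k * w := by linarith [hw]
        _ = (2^(s-1) + 2^(k-1)*w) + (2^(s-1) + 2^(k-1)*w) := by
            rw [e1, e2]; ring
      obtain ⟨e, he⟩ : (2:ℤ) ∣ y - b' := by
        obtain ⟨w1, hw1⟩ := hyeven
        obtain ⟨w2, hw2⟩ := hb'even
        exact ⟨w1 - w2, by omega⟩
      have hcopa : IsCoprime a' (2^(k-1)*m) := by
        have c1 : IsCoprime a' ((2:ℤ)^(k-1)) := (coprime_two_int a' ha').symm.pow_right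
        exact c1.mul_right hcop_am
      obtain ⟨x, hx⟩ := solveLin (2^(k-1)*m) a' e hcopa
      refine ⟨x, ?_⟩
      simp only [Set.mem_setOf_eq, hqx x]
      have hyy : (2:ℤ)^k * m ∣ (2*a'*x + b') - y := by
        obtain ⟨w, hw⟩ := hx
        exact ⟨w, by linear_combination 2*hw - he - m*w*e2⟩
      have hkey : 4*a'*(a'*x^2+b'*x+c') = (2*a'*x+b')^2 - (b'^2-4*a'*c') := by ring
      have hdvd2k : (2:ℤ)^k ∣ (2*a'*x+b')^2 - (b'^2-4*a'*c') := by
        have hid : (2*a'*x+b')^2 - (b'^2-4*a'*c') =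
            ((2*a'*x+b') - y)*((2*a'*x+b') + y) + (y - 2^s)*(y + 2^s)
              + (2^s*2^s - 2^(k-1)*D') := by
          rw [hDval]; ring
        rw [hid]
        refine dvd_add (dvd_add ?_ ?_) ?_
        · exact ((Dvd.intro m rfl).trans hyy).mul_right _
        · exact hy1.mul_right _
        · have e3 : (2:ℤ)^s*2^s = 2^(k-1) := by rw [← pow_add]; congr 1; omega
          rw [e3]
          obtain ⟨t8, ht8⟩ := h8'
          exact ⟨-(4*t8), by linear_combination -(2:ℤ)^(k-1)*ht8 + 4*t8*e2⟩
      have hdvdm : m ∣ (2*a'*x+b')^2 - (b'^2-4*a'*c') := by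
        have hmy : m ∣ (2*a'*x+b') - z := by
          have t1 : m ∣ (2*a'*x+b') - y := (Dvd.intro_left (2^k) rfl).trans hyy
          have t2 := dvd_add t1 hy2
          rwa [show ((2*a'*x+b') - y) + (y - z) = (2*a'*x+b') - z by ring] at t2
        have hid2 : (2*a'*x+b')^2 - (b'^2-4*a'*c') =
            ((2*a'*x+b') - z)*((2*a'*x+b') + z) + (z^2 - (b'^2-4*a'*c')) := by ring
        rw [hid2]
        exact dvd_add (hmy.mul_right _) hz
      have hboth : (2:ℤ)^k * m ∣ 4*a'*(a'*x^2+b'*x+c') := by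
        rw [hkey]
        exact (hcop2m.pow_left).mul_dvd hdvd2k hdvdm
      have h4' : (4:ℤ)*(2^(k-2)*m) ∣ 4*(a'*(a'*x^2+b'*x+c')) := by
        have e4 : (4:ℤ)*(2^(k-2)*m) = 2^k*m := by
          rw [show (4:ℤ) = 2^2 by norm_num, ← mul_assoc, ← pow_add]
          congr 2
          omega
        rw [e4, show (4:ℤ)*(a'*(a'*x^2+b'*x+c')) = 4*a'*(a'*x^2+b'*x+c') by ring]
        exact hboth
      have h5' : (2:ℤ)^(k-2)*m ∣ a'*(a'*x^2+b'*x+c') :=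
        (mul_dvd_mul_iff_left (by norm_num : (4:ℤ) ≠ 0)).mp h4'
      have hcopa2 : IsCoprime ((2:ℤ)^(k-2)*m) a' := by
        have c1 : IsCoprime ((2:ℤ)^(k-2)) a' := (coprime_two_int a' ha').pow_left
        exact c1.mul_left hcop_am.symm
      exact (hcopa2.dvd_of_dvd_mul_left h5').mul_left r
    · ext x
      simp only [Set.mem_setOf_eq, hqx x]
      constructor
      · intro hmem
        have hm1 : m ∣ r * (a'*x^2+b'*x+c') :=
          dvd_trans ⟨2^(k-2), by ring⟩ hmem
        have h1 := lemA r a' b' c' m δ hm0 hδ hDC hcop_am x hm1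
        have h2a : (2:ℤ)^(k-2) ∣ r * (a'*x^2+b'*x+c') :=
          dvd_trans ⟨m, rfl⟩ hmem
        have hcop2r : IsCoprime ((2:ℤ)^(k-2)) r := (coprime_two_int r hrodd).pow_left
        have h2 : (2:ℤ)^(k-2) ∣ (a'*x^2+b'*x+c') := hcop2r.dvd_of_dvd_mul_left h2a
        have h3 := lemB k hk3 hkodd a' b' c' D' ha' hDval h8' x h2
        have h4 : (2:ℤ)^k * m ∣ (a'*x^2+b'*x+c') := (hcop2m.pow_left).mul_dvd h3 h1
        rw [hnm, show (2:ℤ)^k * r * m = r * (2^k * m) by ring]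
        exact mul_dvd_mul_left r h4
      · intro hmem
        refine dvd_trans ?_ hmem
        refine ⟨4 * r, ?_⟩
        rw [hnm, show (2:ℤ)^k = 2^(k-2) * 4 by
          rw [show (4:ℤ) = 2^2 by norm_num, ← pow_add]; congr 1; omega]
        ring
end

section
/- Let p be an odd prime, let i be an integer with i ≥ 2, and let a, b, c be integers with a ≠ 0 and gcd(a, p^i) = p^l for some l with 1 ≤ l < i; let d = b² − 4·a·c. Then IQF is valid for a·x² + b·x + c ≡ 0 (mod p^i) if and only if either (a) d is not a quadratic residue of p^i, or (b) d is a quadratic residue of p^i and exactly one of the following mutually exclusive conditions holds: (i) l > 1, p divides b, and (p^i, p^l) forms a (b, d)-obstruction; (ii) l = 1, i is odd, p divides both b and c, and p^{i+1} divides d. -/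
/-!
Write `a = p^l a'` with `p ∤ a'`. Since `4a·(ax² + bx + c) = (2ax + b)² - d` and `4a'` is a unit
modulo `p^i`, IQF fails exactly when some square root `w` of `d` modulo `p^i` with
`w ≡ b (mod p^l)` is not a square root of `d` modulo `p^(i+l)`. Shifting such a root by a
suitable multiple of a power of `p` changes `w² - d` by an amount whose `p`-adic valuation lies
in `[i, i + l)`, so a non-lifting root exists as soon as some root `≡ b (mod p^l)` exists, except
when `l = 1` and `p^i ∣ d`; there the roots are exactly the multiples of `p^⌈i/2⌉`. Conditions
(iii) and (iv) of an obstruction enumerate the square roots of `d` modulo `p^i`, so they say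
precisely that no root is `≡ b (mod p^l)`.
-/

theorem Prime.pow_dvd_pow_mul_iff_le {M : Type*} [CommMonoidWithZero M] [IsCancelMulZero M]
    {P u : M} (hP : Prime P) (hu : ¬ P ∣ u) {e f : ℕ} : P ^ e ∣ P ^ f * u ↔ e ≤ f := by
  refine ⟨fun h => ?_, fun h => (pow_dvd_pow P h).mul_right u⟩
  by_contra! hfe
  have : P ^ f * P ∣ P ^ f * u := (pow_succ P f ▸ pow_dvd_pow P hfe).trans h
  exact hu ((mul_dvd_mul_iff_left (pow_ne_zero f hP.ne_zero)).mp this)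

theorem exists_sq_sub_not_dvd_of_shift {R : Type*} [CommRing R] {M N N' b d w δ : R}
    (hwb : M ∣ w - b) (hwd : N ∣ w ^ 2 - d) (hMδ : M ∣ δ) (hNδ : N ∣ δ * (2 * w + δ))
    (hN'δ : ¬ N' ∣ δ * (2 * w + δ)) :
    ∃ w', M ∣ w' - b ∧ N ∣ w' ^ 2 - d ∧ ¬ N' ∣ w' ^ 2 - d := by
  by_cases hw : N' ∣ w ^ 2 - d
  · have hshift : (w + δ) ^ 2 - d = (w ^ 2 - d) + δ * (2 * w + δ) := by ring
    refine ⟨w + δ, by simpa [add_sub_right_comm] using dvd_add hwb hMδ, ?_, ?_⟩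
    · rw [hshift]; exact dvd_add hwd hNδ
    · rwa [hshift, dvd_add_right hw]
  · exact ⟨w, hwb, hwd, hw⟩

theorem exists_natCast_lt_dvd_sub_s18 {A : ℤ} (hA : 0 < A) (q : ℤ) :
    ∃ j : ℕ, (j : ℤ) < A ∧ A ∣ q - j := by
  refine ⟨(q % A).toNat, ?_, ?_⟩ <;> rw [Int.toNat_of_nonneg (Int.emod_nonneg q hA.ne')]
  exacts [Int.emod_lt_of_pos q hA, Int.dvd_self_sub_emod]

namespace Int

variable {P : ℤ}

theorem exists_eq_pow_mul_not_dvd (hP : Prime P) {w : ℤ} (hw : w ≠ 0) :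
    ∃ (f : ℕ) (u : ℤ), w = P ^ f * u ∧ ¬ P ∣ u := by
  have hfin : FiniteMultiplicity P w :=
    Int.finiteMultiplicity_iff.mpr ⟨fun h => hP.not_isUnit (Int.isUnit_iff_natAbs_eq.mpr h), hw⟩
  obtain ⟨u, hu, hPu⟩ := hfin.exists_eq_pow_mul_and_not_dvd
  exact ⟨_, u, hu, hPu⟩

theorem pow_dvd_of_pow_dvd_sq (hP : Prime P) {w : ℤ} {s : ℕ} (h : P ^ (2 * s - 1) ∣ w ^ 2) :
    P ^ s ∣ w := by
  rcases eq_or_ne w 0 with rfl | hw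
  · exact dvd_zero _
  obtain ⟨f, u, rfl, hu⟩ := exists_eq_pow_mul_not_dvd hP hw
  have hu2 : ¬ P ∣ u ^ 2 := fun h => hu (hP.dvd_of_dvd_pow h)
  rw [mul_pow, ← pow_mul, hP.pow_dvd_pow_mul_iff_le hu2] at h
  exact (pow_dvd_pow P (by omega)).mul_right u

theorem sq_sub_dvd_iff_of_dvd (hP : Prime P) {i s : ℕ} {d w : ℤ} (hd : P ^ i ∣ d)
    (hs : i = 2 * s ∨ i = 2 * s - 1) : P ^ i ∣ w ^ 2 - d ↔ P ^ s ∣ w := by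
  rw [dvd_sub_left hd]
  refine ⟨fun h => pow_dvd_of_pow_dvd_sq hP ((pow_dvd_pow P (by omega)).trans h), fun h => ?_⟩
  exact (pow_dvd_pow P (by omega)).trans (pow_mul P s 2 ▸ pow_dvd_pow_of_dvd h 2)

theorem exists_root_decomposition (hP : Prime P) {i : ℕ} {d w : ℤ} (hw : P ^ i ∣ w ^ 2 - d)
    (hd : ¬ P ^ i ∣ d) :
    ∃ (f : ℕ) (u d₁ : ℤ), w = P ^ f * u ∧ d = P ^ (2 * f) * d₁ ∧ ¬ P ∣ u ∧ ¬ P ∣ d₁ ∧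
      2 * f < i ∧ P ^ (i - 2 * f) ∣ u ^ 2 - d₁ := by
  have hw0 : w ≠ 0 := by rintro rfl; exact hd (by simpa using hw)
  obtain ⟨f, u, rfl, hu⟩ := exists_eq_pow_mul_not_dvd hP hw0
  have hsq : (P ^ f * u) ^ 2 = P ^ (2 * f) * u ^ 2 := by rw [mul_pow, ← pow_mul']
  have hfi : 2 * f < i := by
    by_contra! hif
    exact hd ((dvd_sub_right ((pow_dvd_pow P hif).trans (hsq ▸ dvd_mul_right _ _))).mp hw)
  obtain ⟨t, ht⟩ := hw
  have hPi : P ^ i = P ^ (2 * f) * P ^ (i - 2 * f) := by rw [← pow_add]; congr 1; omega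
  refine ⟨f, u, u ^ 2 - P ^ (i - 2 * f) * t, rfl, ?_, hu, fun h => hu ?_, hfi, ⟨t, by ring⟩⟩
  · linear_combination hsq - ht - t * hPi
  · have hPt : P ∣ P ^ (i - 2 * f) * t := (dvd_pow_self P (by omega)).mul_right t
    exact hP.dvd_of_dvd_pow ((dvd_sub_left hPt).mp h)

theorem exists_not_dvd_mul_two_mul_add (hP : Prime P) (hP2 : ¬ P ∣ 2) (u : ℤ) :
    ∃ k : ℤ, ¬ P ∣ k * (2 * u + k) := by
  by_cases h : P ∣ 2 * u + 1
  · refine ⟨2, fun h2 => ?_⟩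
    rcases hP.dvd_or_dvd h2 with h2 | h2
    · exact hP2 h2
    · exact hP.not_dvd_one ((dvd_add_right h).mp (by convert h2 using 1; ring))
  · exact ⟨1, by simpa using h⟩

theorem exists_nonlifting_root_of_eq_pow_mul (hP : Prime P) (hP2 : ¬ P ∣ 2) {i l f m : ℕ}
    {b d w u : ℤ} (hw : w = P ^ f * u) (hu : ¬ P ∣ u) (hfm : f < m) (hlm : l ≤ m)
    (him : i ≤ m + f) (hmi : m + f < i + l) (hwb : P ^ l ∣ w - b) (hwd : P ^ i ∣ w ^ 2 - d) :
    ∃ w', P ^ l ∣ w' - b ∧ P ^ i ∣ w' ^ 2 - d ∧ ¬ P ^ (i + l) ∣ w' ^ 2 - d := by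
  have hm : P ^ m = P ^ f * P ^ (m - f) := by rw [← pow_add]; congr 1; omega
  have hunit : ¬ P ∣ 2 * u + P ^ (m - f) := fun h => by
    rcases hP.dvd_or_dvd ((dvd_add_left (dvd_pow_self P (by omega))).mp h) with h | h
    exacts [hP2 h, hu h]
  have hshift : P ^ m * (2 * w + P ^ m) = P ^ (m + f) * (2 * u + P ^ (m - f)) := by
    rw [hw, pow_add]; linear_combination P ^ m * hm
  refine exists_sq_sub_not_dvd_of_shift hwb hwd (pow_dvd_pow P hlm) ?_ ?_ <;>
    rw [hshift, hP.pow_dvd_pow_mul_iff_le hunit] <;> omega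

theorem exists_nonlifting_root_of_pow_dvd (hP : Prime P) (hP2 : ¬ P ∣ 2) {i l m : ℕ} {b d w : ℤ}
    (hlm : l ≤ m) (him : i ≤ 2 * m) (hmi : 2 * m < i + l) (hw : P ^ m ∣ w)
    (hwb : P ^ l ∣ w - b) (hwd : P ^ i ∣ w ^ 2 - d) :
    ∃ w', P ^ l ∣ w' - b ∧ P ^ i ∣ w' ^ 2 - d ∧ ¬ P ^ (i + l) ∣ w' ^ 2 - d := by
  obtain ⟨u, rfl⟩ := hw
  obtain ⟨k, hk⟩ := exists_not_dvd_mul_two_mul_add hP hP2 u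
  have hshift : k * P ^ m * (2 * (P ^ m * u) + k * P ^ m) = P ^ (2 * m) * (k * (2 * u + k)) := by
    rw [pow_mul']; ring
  refine exists_sq_sub_not_dvd_of_shift hwb hwd ((pow_dvd_pow P hlm).mul_left k) ?_ ?_ <;>
    rw [hshift, hP.pow_dvd_pow_mul_iff_le hk] <;> omega

theorem exists_nonlifting_root (hP : Prime P) (hP2 : ¬ P ∣ 2) {i l : ℕ} {b d w : ℤ}
    (hl : 0 < l) (hli : l < i) (hwb : P ^ l ∣ w - b) (hwd : P ^ i ∣ w ^ 2 - d)
    (h : 2 ≤ l ∨ ¬ P ^ i ∣ d) :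
    ∃ w', P ^ l ∣ w' - b ∧ P ^ i ∣ w' ^ 2 - d ∧ ¬ P ^ (i + l) ∣ w' ^ 2 - d := by
  rcases h with hl2 | hd
  · have hM := exists_nonlifting_root_of_pow_dvd hP hP2 (m := max l ((i + 1) / 2))
      (by omega) (by omega) (by omega) (w := w) (hwb := hwb) (hwd := hwd)
    rcases eq_or_ne w 0 with rfl | hw0
    · exact hM (dvd_zero _)
    obtain ⟨f, u, hw, hu⟩ := exists_eq_pow_mul_not_dvd hP hw0
    by_cases hf : f < max l (i - f)
    · exact exists_nonlifting_root_of_eq_pow_mul hP hP2 (m := max l (i - f)) hw hu hf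
        (by omega) (by omega) (by omega) hwb hwd
    · exact hM (hw ▸ (pow_dvd_pow P (by omega)).mul_right u)
  · obtain ⟨f, u, -, hw, -, hu, -, hf, -⟩ := exists_root_decomposition hP hwd hd
    exact exists_nonlifting_root_of_eq_pow_mul hP hP2 (m := max l (i - f)) hw hu
      (by omega) (by omega) (by omega) (by omega) hwb hwd

theorem exists_root_sub_dvd_of_not_dvd (hP : Prime P) (hP2 : ¬ P ∣ 2) {i l : ℕ} {b d w₀ : ℤ}
    (hb : ¬ P ∣ b) (hbd : P ^ l ∣ b ^ 2 - d) (hli : l ≤ i) (hw₀ : P ^ i ∣ w₀ ^ 2 - d) :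
    ∃ w, P ^ l ∣ w - b ∧ P ^ i ∣ w ^ 2 - d := by
  have hprod : P ^ l ∣ (w₀ - b) * (w₀ + b) := by
    rw [show (w₀ - b) * (w₀ + b) = (w₀ ^ 2 - d) - (b ^ 2 - d) by ring]
    exact dvd_sub ((pow_dvd_pow P hli).trans hw₀) hbd
  have h2b : ¬ P ∣ (w₀ + b) - (w₀ - b) := fun h => by
    rcases hP.dvd_or_dvd (show P ∣ 2 * b by convert h using 1; ring) with h | h
    exacts [hP2 h, hb h]
  by_cases hminus : P ∣ w₀ - b
  · have hplus : ¬ P ∣ w₀ + b := fun h => h2b (dvd_sub h hminus)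
    exact ⟨w₀, hP.pow_dvd_of_dvd_mul_right l hplus hprod, hw₀⟩
  · refine ⟨-w₀, ?_, by rwa [neg_sq]⟩
    rw [show -w₀ - b = -(w₀ + b) by ring, dvd_neg]
    exact hP.pow_dvd_of_dvd_mul_left l hminus hprod

theorem forall_sq_sub_dvd_succ_iff_of_dvd (hP : Prime P) {i : ℕ} {d : ℤ} (hd : P ^ i ∣ d) :
    (∀ w, P ^ i ∣ w ^ 2 - d → P ^ (i + 1) ∣ w ^ 2 - d) ↔ Odd i ∧ P ^ (i + 1) ∣ d := by
  have hroot (w : ℤ) : P ^ i ∣ w ^ 2 - d ↔ P ^ ((i + 1) / 2) ∣ w :=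
    sq_sub_dvd_iff_of_dvd hP hd (by omega)
  constructor
  · intro H
    have hd1 : P ^ (i + 1) ∣ d := by simpa using H 0 ((hroot 0).mpr (dvd_zero _))
    refine ⟨Nat.not_even_iff_odd.mp fun ⟨t, ht⟩ => ?_, hd1⟩
    have h := H (P ^ t) ((hroot _).mpr (pow_dvd_pow P (by omega)))
    rw [← pow_mul, dvd_sub_left hd1, show t * 2 = i by omega,
      _root_.pow_dvd_pow_iff hP.ne_zero hP.not_isUnit] at h
    omega
  · rintro ⟨⟨t, rfl⟩, hd1⟩ w hw
    obtain ⟨u, rfl⟩ := (hroot w).mp hw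
    rw [dvd_sub_left hd1, mul_pow, ← pow_mul, show (2 * t + 1 + 1) / 2 * 2 = 2 * t + 1 + 1 by omega]
    exact dvd_mul_right _ _

theorem dvd_of_sq_dvd_sq_sub_four_mul (hP : Prime P) (hP2 : ¬ P ∣ 2) {a' b c : ℤ}
    (ha' : ¬ P ∣ a') (hb : P ∣ b) (hd : P ^ 2 ∣ b ^ 2 - 4 * (P * a') * c) : P ∣ c := by
  have h : P * P ∣ P * (2 * (2 * (a' * c))) := by
    rw [← sq, show P * (2 * (2 * (a' * c))) = b ^ 2 - (b ^ 2 - 4 * (P * a') * c) by ring]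
    exact dvd_sub (pow_dvd_pow_of_dvd hb 2) hd
  rcases hP.dvd_or_dvd ((mul_dvd_mul_iff_left hP.ne_zero).mp h) with h | h
  · exact absurd h hP2
  rcases hP.dvd_or_dvd h with h | h
  · exact absurd h hP2
  rcases hP.dvd_or_dvd h with h | h
  · exact absurd h ha'
  · exact h

end Int

theorem padicValInt_pow_mul {p : ℕ} (hp : p.Prime) {f : ℕ} {u : ℤ} (hu : ¬ (p : ℤ) ∣ u) :
    padicValInt p ((p : ℤ) ^ f * u) = f := by
  have : Fact p.Prime := ⟨hp⟩
  have hu0 : u ≠ 0 := by rintro rfl; exact hu (dvd_zero _)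
  rw [padicValInt.mul (pow_ne_zero _ (by exact_mod_cast hp.ne_zero)) hu0,
    padicValInt.eq_zero_of_not_dvd hu, ← Nat.cast_pow, padicValInt.of_nat, padicValNat.prime_pow,
    add_zero]

theorem forall_natCast_mul_pow_not_dvd_sub_iff {p : ℕ} (hp : p.Prime) {i l s : ℕ} {b d : ℤ}
    (hli : l ≤ i) (hd : (p : ℤ) ^ i ∣ d) (hs : i = 2 * s ∨ i = 2 * s - 1) :
    (∀ j : ℕ, j < p ^ (i - s) → ¬ (p : ℤ) ^ l ∣ (j : ℤ) * (p : ℤ) ^ s - b) ↔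
      ∀ w, (p : ℤ) ^ i ∣ w ^ 2 - d → ¬ (p : ℤ) ^ l ∣ w - b := by
  simp_rw [Int.sq_sub_dvd_iff_of_dvd (Nat.prime_iff_prime_int.mp hp) hd hs]
  refine ⟨fun H w ⟨u, hu⟩ hwb => ?_, fun H j _ => H _ (dvd_mul_left _ _)⟩
  obtain ⟨j, hj, t, ht⟩ :=
    exists_natCast_lt_dvd_sub_s18 (pow_pos (Int.natCast_pos.mpr hp.pos) (i - s)) u
  refine H j (by exact_mod_cast hj) ?_
  have hPi : (p : ℤ) ^ i = p ^ s * p ^ (i - s) := by rw [← pow_add]; congr 1; omega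
  rw [show (j : ℤ) * p ^ s - b = (w - b) - p ^ i * t by
    rw [hu, hPi]; linear_combination (-(p : ℤ) ^ s) * ht]
  exact dvd_sub hwb ((pow_dvd_pow _ hli).mul_right t)

theorem forall_not_dvd_sub_iff_of_not_dvd {p : ℕ} (hp : p.Prime) {i l μ : ℕ} {b d : ℤ}
    (hli : l ≤ i) (hd : ¬ (p : ℤ) ^ i ∣ d) (hμ : padicValInt p d = 2 * μ) :
    (∀ σ : ℤ, 0 ≤ σ → σ < (p : ℤ) ^ (i - 2 * μ) →
        (p : ℤ) ^ (i - 2 * μ) ∣ σ ^ 2 - d / (p : ℤ) ^ (2 * μ) →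
        ∀ j : ℕ, j < p ^ μ →
          ¬ (p : ℤ) ^ l ∣ σ * (p : ℤ) ^ μ + (j : ℤ) * (p : ℤ) ^ (i - μ) - b) ↔
      ∀ w, (p : ℤ) ^ i ∣ w ^ 2 - d → ¬ (p : ℤ) ^ l ∣ w - b := by
  have hP := Nat.prime_iff_prime_int.mp hp
  set P : ℤ := (p : ℤ)
  have hP0 : 0 < P := Int.natCast_pos.mpr hp.pos
  have hd2μ : P ^ (2 * μ) ∣ d := hμ ▸ padicValInt_dvd d
  have hμi : 2 * μ < i := by
    by_contra! h
    exact hd ((pow_dvd_pow P h).trans hd2μ)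
  obtain ⟨d₁, hd₁⟩ := hd2μ
  rw [hd₁, Int.mul_ediv_cancel_left _ (pow_ne_zero _ hP0.ne')]
  have e₁ : P ^ (i - μ) = P ^ μ * P ^ (i - 2 * μ) := by rw [← pow_add]; congr 1; omega
  have e₂ : P ^ i = P ^ μ * P ^ μ * P ^ (i - 2 * μ) := by
    rw [← pow_add, ← pow_add]; congr 1; omega
  have e₃ : P ^ (2 * μ) = P ^ μ * P ^ μ := by rw [← pow_add]; congr 1; omega
  constructor
  · intro H w hw hwb
    obtain ⟨f, u, d₁', rfl, hd', hu, hd₁', -, hud⟩ := Int.exists_root_decomposition hP hw (hd₁ ▸ hd)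
    obtain rfl : f = μ := by
      have := padicValInt_pow_mul hp (f := 2 * f) hd₁'
      rw [← hd', ← hd₁, hμ] at this
      omega
    obtain rfl : d₁ = d₁' := mul_left_cancel₀ (pow_ne_zero _ hP0.ne') hd'
    -- `w = P^f (σ + P^(i-2f) (j + P^f r)) ≡ σ P^f + j P^(i-f) (mod P^i)`
    obtain ⟨σ, hσ, q, hq⟩ := exists_natCast_lt_dvd_sub_s18 (pow_pos hP0 (i - 2 * f)) u
    obtain ⟨j, hj, r, hr⟩ := exists_natCast_lt_dvd_sub_s18 (pow_pos hP0 f) q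
    refine H σ (Nat.cast_nonneg _) hσ ?_ j (by simp only [P] at hj; exact_mod_cast hj) ?_
    · rw [show (σ : ℤ) ^ 2 - d₁ = (u ^ 2 - d₁) - (u - σ) * (u + σ) by ring, hq]
      exact dvd_sub hud (dvd_mul_of_dvd_left (dvd_mul_right _ _) _)
    · rw [show (σ : ℤ) * P ^ f + j * P ^ (i - f) - b = (P ^ f * u - b) - P ^ i * r by
        rw [e₁, e₂]; linear_combination (-P ^ f) * hq - P ^ f * P ^ (i - 2 * f) * hr]
      exact dvd_sub hwb ((pow_dvd_pow P hli).mul_right r)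
  · intro H σ _ _ ⟨t, ht⟩ j _ hdvd
    refine H _ ⟨t + 2 * σ * j + j ^ 2 * P ^ (i - 2 * μ), ?_⟩ hdvd
    rw [e₁, e₂, e₃]
    linear_combination (P ^ μ * P ^ μ) * ht

theorem obstruction_iff_forall_not_dvd_sub {p : ℕ} (hp : p.Prime) {i l : ℕ} {b d : ℤ}
    (hli : l ≤ i) (hqr : IsQR ((p : ℤ) ^ i) d) :
    Obstruction p i l b d ↔ ∀ w, (p : ℤ) ^ i ∣ w ^ 2 - d → ¬ (p : ℤ) ^ l ∣ w - b := by
  by_cases hd : (p : ℤ) ^ i ∣ d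
  · simp only [Obstruction, hd, not_true_eq_false, false_and, true_and, false_or]
    constructor
    · rintro ⟨s, hs, H⟩
      exact (forall_natCast_mul_pow_not_dvd_sub_iff hp hli hd hs).mp H
    · intro H
      exact ⟨(i + 1) / 2, by omega,
        (forall_natCast_mul_pow_not_dvd_sub_iff hp hli hd (by omega)).mpr H⟩
  · simp only [Obstruction, hd, not_false_eq_true, true_and, false_and, or_false]
    obtain ⟨w₀, hw₀⟩ := hqr
    obtain ⟨f, -, d₁, -, hd₁, -, hPd₁, -⟩ :=
      Int.exists_root_decomposition (Nat.prime_iff_prime_int.mp hp) hw₀ hd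
    constructor
    · rintro ⟨μ, hμ, H⟩
      exact (forall_not_dvd_sub_iff_of_not_dvd hp hli hd hμ).mp H
    · intro H
      have hμ : padicValInt p d = 2 * f := hd₁ ▸ padicValInt_pow_mul hp hPd₁
      exact ⟨f, hμ, (forall_not_dvd_sub_iff_of_not_dvd hp hli hd hμ).mpr H⟩

theorem forall_sq_sub_dvd_iff {p : ℕ} (hp : p.Prime) (hP2 : ¬ (p : ℤ) ∣ 2) {i l : ℕ} {b d : ℤ}
    (hl : 1 ≤ l) (hli : l < i) (hqr : IsQR ((p : ℤ) ^ i) d) (hbd : (p : ℤ) ^ l ∣ b ^ 2 - d) :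
    (∀ w, (p : ℤ) ^ l ∣ w - b → (p : ℤ) ^ i ∣ w ^ 2 - d → (p : ℤ) ^ (i + l) ∣ w ^ 2 - d) ↔
      (1 < l ∧ (p : ℤ) ∣ b ∧ Obstruction p i l b d) ∨
      (l = 1 ∧ Odd i ∧ (p : ℤ) ∣ b ∧ (p : ℤ) ^ (i + 1) ∣ d) := by
  have hP := Nat.prime_iff_prime_int.mp hp
  have ⟨w₀, hw₀⟩ := hqr
  have not_lifts : ∀ w, (p : ℤ) ^ l ∣ w - b → (p : ℤ) ^ i ∣ w ^ 2 - d →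
      (2 ≤ l ∨ ¬ (p : ℤ) ^ i ∣ d) →
      ¬ ∀ w, (p : ℤ) ^ l ∣ w - b → (p : ℤ) ^ i ∣ w ^ 2 - d → (p : ℤ) ^ (i + l) ∣ w ^ 2 - d :=
    fun w hwb hwd h H => by
      obtain ⟨w', hw'b, hw'd, hw'⟩ := Int.exists_nonlifting_root hP hP2 hl hli hwb hwd h
      exact hw' (H w' hw'b hw'd)
  by_cases hb : (p : ℤ) ∣ b
  swap
  · have hd : ¬ (p : ℤ) ∣ d := fun hd => hb (hP.dvd_of_dvd_pow
      ((dvd_sub_left hd).mp ((dvd_pow_self _ (by omega)).trans hbd)))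
    obtain ⟨w, hwb, hwd⟩ := Int.exists_root_sub_dvd_of_not_dvd hP hP2 hb hbd hli.le hw₀
    simp only [hb, false_and, and_false, or_false, iff_false]
    exact not_lifts w hwb hwd (Or.inr fun h => hd ((dvd_pow_self _ (by omega)).trans h))
  obtain rfl | hl2 := eq_or_lt_of_le hl
  · simp only [hb, lt_irrefl, false_and, true_and, false_or]
    have hd : (p : ℤ) ∣ d := by
      rw [pow_one] at hbd
      exact (dvd_sub_right (dvd_pow hb two_ne_zero)).mp hbd
    have hroot_sub (w : ℤ) (hw : (p : ℤ) ^ i ∣ w ^ 2 - d) : (p : ℤ) ^ 1 ∣ w - b := by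
      have hw2 := (dvd_sub_left hd).mp ((dvd_pow_self _ (by omega)).trans hw)
      exact (pow_one (p : ℤ)).symm ▸ dvd_sub (hP.dvd_of_dvd_pow hw2) hb
    by_cases hdi : (p : ℤ) ^ i ∣ d
    · rw [← Int.forall_sq_sub_dvd_succ_iff_of_dvd hP hdi]
      exact forall_congr' fun w => ⟨fun H hw => H (hroot_sub w hw) hw, fun H _ => H⟩
    · exact iff_of_false (not_lifts w₀ (hroot_sub w₀ hw₀) hw₀ (Or.inr hdi))
        fun ⟨_, hd1⟩ => hdi ((pow_dvd_pow _ (by omega)).trans hd1)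
  · simp only [hl2, hb, hl2.ne', true_and, false_and, or_false]
    rw [obstruction_iff_forall_not_dvd_sub hp hli.le hqr]
    exact ⟨fun H w hwd hwb => not_lifts w hwb hwd (Or.inl hl2) H,
      fun H w hwb hwd => absurd hwb (H w hwd)⟩

theorem iqf_iff_forall_sq_sub_dvd {a b c n g a' : ℤ} (hg : g ≠ 0) (ha : a = g * a')
    (hcop : IsCoprime (2 * a') n) :
    IQF a b c n ↔ ∀ w, g ∣ w - b → n ∣ w ^ 2 - (b ^ 2 - 4 * a * c) →
      n * g ∣ w ^ 2 - (b ^ 2 - 4 * a * c) := by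
  subst ha
  have key (x : ℤ) : (2 * (g * a') * x + b) ^ 2 - (b ^ 2 - 4 * (g * a') * c) =
      g * (4 * a' * ((g * a') * x ^ 2 + b * x + c)) := by ring
  constructor
  · intro H w ⟨z, hz⟩ hw
    obtain ⟨x, hx⟩ : ∃ x, n ∣ 2 * a' * x - z := by
      obtain ⟨u, v, huv⟩ := hcop
      exact ⟨u * z, -(v * z), by linear_combination z * huv⟩
    have hwx : n * g ∣ 2 * (g * a') * x - (-b + w) := by
      rw [show 2 * (g * a') * x - (-b + w) = g * (2 * a' * x - z) by linear_combination -hz]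
      exact mul_comm g n ▸ mul_dvd_mul_left g hx
    have hq : n ∣ (g * a') * x ^ 2 + b * x + c :=
      (H x).mpr ⟨w, hw, (dvd_mul_right n g).trans hwx⟩
    rw [show w ^ 2 - (b ^ 2 - 4 * (g * a') * c) =
        ((2 * (g * a') * x + b) ^ 2 - (b ^ 2 - 4 * (g * a') * c)) -
          (2 * (g * a') * x - (-b + w)) * (2 * (g * a') * x + b + w) by ring, key]
    exact dvd_sub (mul_comm g n ▸ mul_dvd_mul_left g (hq.mul_left _)) (hwx.mul_right _)
  · intro H x
    refine ⟨fun hq => ⟨2 * (g * a') * x + b, ?_, by simp⟩, fun ⟨s, hs, hxs⟩ => ?_⟩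
    · rw [key]; exact (hq.mul_left _).mul_left g
    have hw : n ∣ (2 * (g * a') * x + b) ^ 2 - (b ^ 2 - 4 * (g * a') * c) := by
      rw [show (2 * (g * a') * x + b) ^ 2 - (b ^ 2 - 4 * (g * a') * c) =
        (2 * (g * a') * x - (-b + s)) * (2 * (g * a') * x + b + s) +
          (s ^ 2 - (b ^ 2 - 4 * (g * a') * c)) by ring]
      exact dvd_add (hxs.mul_right _) hs
    have h := H _ ⟨2 * a' * x, by ring⟩ hw
    rw [key, mul_comm n g] at h
    have h4 : IsCoprime (4 * a') n := by
      simpa [← mul_assoc] using hcop.of_mul_left_left.mul_left hcop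
    exact h4.symm.dvd_of_dvd_mul_left ((mul_dvd_mul_iff_left hg).mp h)

theorem exists_eq_pow_mul_not_dvd_of_gcd_eq {p i l : ℕ} (hp : p.Prime) (hli : l < i) {a : ℤ}
    (h : Int.gcd a ((p : ℤ) ^ i) = p ^ l) : ∃ a', a = (p : ℤ) ^ l * a' ∧ ¬ (p : ℤ) ∣ a' := by
  have hP := Nat.prime_iff_prime_int.mp hp
  obtain ⟨a', ha'⟩ : (p : ℤ) ^ l ∣ a := by exact_mod_cast h ▸ Int.gcd_dvd_left a ((p : ℤ) ^ i)
  refine ⟨a', ha', fun ⟨t, ht⟩ => ?_⟩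
  have hdvd : (p : ℤ) ^ (l + 1) ∣ ((p ^ l : ℕ) : ℤ) :=
    h ▸ Int.dvd_coe_gcd ⟨t, by rw [ha', ht, pow_succ]; ring⟩ (pow_dvd_pow _ hli)
  push_cast at hdvd
  rw [pow_dvd_pow_iff hP.ne_zero hP.not_isUnit] at hdvd
  omega

theorem corollary_6_2_general (p : ℕ) (hp : p.Prime) (hpodd : Odd p) (i l : ℕ) (a b c : ℤ)
    (hl1 : 1 ≤ l) (hli : l < i) (hgcd : Int.gcd a ((p : ℤ) ^ i) = p ^ l) :
    IQF a b c ((p : ℤ) ^ i) ↔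
      (¬ IsQR ((p : ℤ) ^ i) (b ^ 2 - 4 * a * c)) ∨
      (IsQR ((p : ℤ) ^ i) (b ^ 2 - 4 * a * c) ∧
        ((1 < l ∧ (p : ℤ) ∣ b ∧ Obstruction p i l b (b ^ 2 - 4 * a * c)) ∨
         (l = 1 ∧ Odd i ∧ (p : ℤ) ∣ b ∧ (p : ℤ) ∣ c ∧
           (p : ℤ) ^ (i + 1) ∣ b ^ 2 - 4 * a * c))) := by
  have hP := Nat.prime_iff_prime_int.mp hp
  have hP2 : ¬ (p : ℤ) ∣ 2 := fun h => by
    obtain rfl : p = 2 := (Nat.prime_dvd_prime_iff_eq hp Nat.prime_two).mp (by exact_mod_cast h)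
    exact absurd hpodd (by decide)
  obtain ⟨a', rfl, ha'⟩ := exists_eq_pow_mul_not_dvd_of_gcd_eq hp hli hgcd
  have hcop : IsCoprime (2 * a') ((p : ℤ) ^ i) :=
    ((hP.coprime_iff_not_dvd.mpr fun h => (hP.dvd_or_dvd h).elim hP2 ha').symm).pow_right
  rw [iqf_iff_forall_sq_sub_dvd (pow_ne_zero l hP.ne_zero) rfl hcop, ← pow_add]
  by_cases hqr : IsQR ((p : ℤ) ^ i) (b ^ 2 - 4 * ((p : ℤ) ^ l * a') * c)
  · have hc : l = 1 → (p : ℤ) ∣ b → (p : ℤ) ^ (i + 1) ∣ b ^ 2 - 4 * ((p : ℤ) ^ l * a') * c →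
        (p : ℤ) ∣ c := by
      rintro rfl hb hd
      rw [pow_one] at hd
      exact Int.dvd_of_sq_dvd_sq_sub_four_mul hP hP2 ha' hb ((pow_dvd_pow _ (by omega)).trans hd)
    rw [forall_sq_sub_dvd_iff hp hP2 hl1 hli hqr ⟨4 * a' * c, by ring⟩]
    simp only [hqr, not_true_eq_false, true_and, false_or]
    exact or_congr_right ⟨fun ⟨h1, h2, h3, h4⟩ => ⟨h1, h2, h3, hc h1 h3 h4, h4⟩,
      fun ⟨h1, h2, h3, _, h4⟩ => ⟨h1, h2, h3, h4⟩⟩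
  · exact iff_of_true (fun w _ hw => absurd ⟨w, hw⟩ hqr) (Or.inl hqr)

/-- Paper's Corollary 6.2. -/
theorem corollary_6_2 (p : ℕ) (hp : p.Prime) (hpodd : Odd p) (i l : ℕ)
    (hi : 2 ≤ i) (a b c : ℤ) (ha : a ≠ 0)
    (hl1 : 1 ≤ l) (hli : l < i) (hgcd : Int.gcd a ((p : ℤ) ^ i) = p ^ l) :
    IQF a b c ((p : ℤ) ^ i) ↔
      (¬ IsQR ((p : ℤ) ^ i) (b ^ 2 - 4 * a * c)) ∨
      (IsQR ((p : ℤ) ^ i) (b ^ 2 - 4 * a * c) ∧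
        ((1 < l ∧ (p : ℤ) ∣ b ∧ Obstruction p i l b (b ^ 2 - 4 * a * c)) ∨
         (l = 1 ∧ Odd i ∧ (p : ℤ) ∣ b ∧ (p : ℤ) ∣ c ∧
           (p : ℤ) ^ (i + 1) ∣ b ^ 2 - 4 * a * c))) :=
  corollary_6_2_general p hp hpodd i l a b c hl1 hli hgcd
end
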